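/- arXiv:1909.06835 — 10 statements merged into one kernel-verified Lean document; each statement's English description precedes it below -/
import Mathlib

section
/- Let N be a finite item set, let C ⊆ N be a set that is not packable into the bin of width W and height H, and let p : N → ℕ satisfy: for every T ⊆ N packable into the bin, Σ_{j∈T} p_j <= |C| - 1. Let j* ∈ N be such that p_{j*} = 0, w_{j*} <= W and h_{j*} <= H, and set α := (|C| - 1) - max{ Σ_{j∈T} p_j : T ⊆ N packable into the bin and j* ∈ T } (the maximum exists and is at most |C| - 1, so α >= 0). Define p' by p'_{j*} = α and p'_j = p_j for j ≠ j*. Then for every T ⊆ N packable into the bin, Σ_{j∈T} p'_j <= |C| - 1. (This is the correctness of one step of the sequential lifting procedure producing a lifted cover inequality from an infeasible set C.) -/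
/-- A packing of the finite set `S` of items into a bin of width `W` and height `H`:
coordinates `x y` place each item inside the bin and the open rectangles of distinct
items are disjoint. -/
def IsPacking {ι : Type*} (w h : ι → ℝ) (W H : ℝ) (S : Finset ι) (x y : ι → ℝ) : Prop :=
  (∀ j ∈ S, 0 ≤ x j ∧ x j + w j ≤ W ∧ 0 ≤ y j ∧ y j + h j ≤ H) ∧
  ∀ i ∈ S, ∀ j ∈ S, i ≠ j →
    Disjoint (Set.Ioo (x i) (x i + w i) ×ˢ Set.Ioo (y i) (y i + h i))
             (Set.Ioo (x j) (x j + w j) ×ˢ Set.Ioo (y j) (y j + h j))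

/-- `S` is packable into the bin of width `W` and height `H`. -/
def Packable {ι : Type*} (w h : ι → ℝ) (W H : ℝ) (S : Finset ι) : Prop :=
  ∃ x y : ι → ℝ, IsPacking w h W H S x y

theorem stmt_3 {ι : Type*} [DecidableEq ι] (w h : ι → ℝ) (W H : ℝ)
    (hW : 0 < W) (hH : 0 < H) (hw : ∀ j, 0 < w j) (hh : ∀ j, 0 < h j)
    (N C : Finset ι) (hCN : C ⊆ N) (hC : ¬ Packable w h W H C)
    (p : ι → ℕ)
    (hp : ∀ T ⊆ N, Packable w h W H T → ∑ j ∈ T, p j ≤ C.card - 1)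
    (jstar : ι) (hjN : jstar ∈ N) (hpj : p jstar = 0)
    (hwj : w jstar ≤ W) (hhj : h jstar ≤ H)
    (M : ℕ)
    (hM1 : ∃ T ⊆ N, Packable w h W H T ∧ jstar ∈ T ∧ ∑ j ∈ T, p j = M)
    (hM2 : ∀ T ⊆ N, Packable w h W H T → jstar ∈ T → ∑ j ∈ T, p j ≤ M)
    (α : ℕ) (hα : α = C.card - 1 - M) :
    ∀ T ⊆ N, Packable w h W H T →
      ∑ j ∈ T, Function.update p jstar α j ≤ C.card - 1 := by
  intro T hTN hT
  by_cases hj : jstar ∈ T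
  · have hsplit : ∑ j ∈ T, Function.update p jstar α j
        = α + ∑ j ∈ T.erase jstar, p j := by
      rw [← Finset.add_sum_erase _ _ hj, Function.update_self]
      congr 1
      exact Finset.sum_congr rfl fun i hi =>
        Function.update_of_ne (Finset.ne_of_mem_erase hi) _ _
    have herase : ∑ j ∈ T.erase jstar, p j = ∑ j ∈ T, p j := by
      rw [← Finset.add_sum_erase _ _ hj, hpj, zero_add]
    have hTM : ∑ j ∈ T, p j ≤ M := hM2 T hTN hT hj
    have hMle : M ≤ C.card - 1 := by
      obtain ⟨T0, hT0N, hT0p, hjT0, hT0M⟩ := hM1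
      rw [← hT0M]; exact hp T0 hT0N hT0p
    rw [hsplit, herase, hα]
    omega
  · have : ∑ j ∈ T, Function.update p jstar α j = ∑ j ∈ T, p j :=
      Finset.sum_congr rfl fun i hi =>
        by rw [Function.update_of_ne (by rintro rfl; exact hj hi)]
    rw [this]; exact hp T hTN hT
end

section
/- Let C and k be positive integers with 2k <= C, and define f_0^k on {0, 1, ..., C} by f_0^k(x) = C if x > C - k, f_0^k(x) = x if k <= x <= C - k, and f_0^k(x) = 0 if x < k. Then f_0^k is a discrete dual feasible function: for every finite family (x_i) of integers in {0, ..., C} with Σ_i x_i <= C, one has Σ_i f_0^k(x_i) <= C = f_0^k(C). -/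
theorem stmt_7 (C k : ℕ) (hk : 0 < k) (hkC : 2 * k ≤ C)
    (f : ℕ → ℕ)
    (hf : ∀ x, f x = if C - k < x then C else if k ≤ x then x else 0)
    {ι : Type*} (s : Finset ι) (x : ι → ℕ)
    (hx : ∀ i ∈ s, x i ≤ C) (hsum : ∑ i ∈ s, x i ≤ C) :
    ∑ i ∈ s, f (x i) ≤ C ∧ f C = C := by
  have hfC : f C = C := by
    rw [hf]; rw [if_pos (by omega)]
  refine ⟨?_, hfC⟩
  classical
  by_cases h : ∃ i ∈ s, C - k < x i
  · obtain ⟨i, hi, hxi⟩ := h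
    rw [← Finset.add_sum_erase s _ hi] at hsum ⊢
    have herase : ∀ j ∈ s.erase i, f (x j) = 0 := by
      intro j hj
      have hjle : x j ≤ ∑ m ∈ s.erase i, x m :=
        Finset.single_le_sum (fun m _ => Nat.zero_le _) hj
      rw [hf]
      rw [if_neg (by omega), if_neg (by omega)]
    rw [Finset.sum_eq_zero herase, hf, if_pos hxi]; omega
  · push_neg at h
    calc ∑ i ∈ s, f (x i) ≤ ∑ i ∈ s, x i := by
          refine Finset.sum_le_sum fun i hi => ?_
          rw [hf, if_neg (not_lt.2 (h i hi))]
          split <;> omega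
      _ ≤ C := hsum
end

section
/- Let C and k be positive integers with k <= C, and define f_2^k on {0, 1, ..., C} by f_2^k(x) = 2(⌊C/k⌋ - ⌊(C - x)/k⌋) if 2x > C, f_2^k(x) = ⌊C/k⌋ if 2x = C, and f_2^k(x) = 2⌊x/k⌋ if 2x < C. Then f_2^k is a discrete dual feasible function: for every finite family (x_i) of integers in {0, ..., C} with Σ_i x_i <= C, one has Σ_i f_2^k(x_i) <= 2⌊C/k⌋ = f_2^k(C). -/
lemma sum_div_le' {ι : Type*} (s : Finset ι) (x : ι → ℕ) (k : ℕ) :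
    ∑ i ∈ s, x i / k ≤ (∑ i ∈ s, x i) / k := by
  induction s using Finset.cons_induction with
  | empty => simp
  | cons a s ha ih =>
    rw [Finset.sum_cons, Finset.sum_cons]
    exact le_trans (Nat.add_le_add_left ih _) (Nat.add_div_le_add_div _ _ _)

theorem stmt_8 (C k : ℕ) (hk : 0 < k) (hkC : k ≤ C)
    (f : ℕ → ℕ)
    (hf : ∀ x, f x = if C < 2 * x then 2 * (C / k - (C - x) / k)
                     else if 2 * x = C then C / k else 2 * (x / k))
    {ι : Type*} (s : Finset ι) (x : ι → ℕ)
    (hx : ∀ i ∈ s, x i ≤ C) (hsum : ∑ i ∈ s, x i ≤ C) :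
    ∑ i ∈ s, f (x i) ≤ 2 * (C / k) ∧ f C = 2 * (C / k) := by
  classical
  have hC : 0 < C := lt_of_lt_of_le hk hkC
  have hfC : f C = 2 * (C / k) := by
    rw [hf, if_pos (by omega)]
    simp
  refine ⟨?_, hfC⟩
  by_cases hbig : ∃ j ∈ s, C < 2 * x j
  · obtain ⟨j, hj, hjbig⟩ := hbig
    have herase : x j + ∑ i ∈ s.erase j, x i = ∑ i ∈ s, x i :=
      Finset.add_sum_erase s x hj
    have hsum' : ∑ i ∈ s.erase j, x i ≤ C - x j := by omega
    have hsmall : ∀ i ∈ s.erase j, f (x i) = 2 * (x i / k) := by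
      intro i hi
      have hxi : x i ≤ C - x j :=
        le_trans (Finset.single_le_sum (f := x) (fun _ _ => Nat.zero_le _) hi) hsum'
      rw [hf, if_neg (by omega), if_neg (by omega)]
    rw [← Finset.add_sum_erase s _ hj]
    have h1 : ∑ i ∈ s.erase j, f (x i) ≤ 2 * ((C - x j) / k) := by
      calc ∑ i ∈ s.erase j, f (x i) = ∑ i ∈ s.erase j, 2 * (x i / k) :=
            Finset.sum_congr rfl hsmall
        _ = 2 * ∑ i ∈ s.erase j, x i / k := by rw [Finset.mul_sum]
        _ ≤ 2 * ((∑ i ∈ s.erase j, x i) / k) :=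
            Nat.mul_le_mul_left 2 (sum_div_le' _ _ _)
        _ ≤ 2 * ((C - x j) / k) :=
            Nat.mul_le_mul_left 2 (Nat.div_le_div_right hsum')
    have h2 : f (x j) = 2 * (C / k - (C - x j) / k) := by rw [hf, if_pos hjbig]
    have h3 : (C - x j) / k ≤ C / k := Nat.div_le_div_right (Nat.sub_le _ _)
    omega
  · push_neg at hbig
    have hsmall : ∀ i ∈ s, 2 * x i ≠ C → f (x i) = 2 * (x i / k) := by
      intro i hi hne
      have := hbig i hi
      rw [hf, if_neg (by omega), if_neg hne]
    have hmid : ∀ i ∈ s, 2 * x i = C → f (x i) = C / k := by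
      intro i hi he
      rw [hf, if_neg (by omega), if_pos he]
    rw [← Finset.sum_filter_add_sum_filter_not s (fun i => 2 * x i = C)]
    set t := s.filter (fun i => 2 * x i = C) with ht
    set u := s.filter (fun i => ¬ 2 * x i = C) with hu
    have hsplit : ∑ i ∈ t, x i + ∑ i ∈ u, x i = ∑ i ∈ s, x i :=
      Finset.sum_filter_add_sum_filter_not s _ x
    have htx : 2 * ∑ i ∈ t, x i = t.card * C := by
      rw [Finset.mul_sum]
      rw [Finset.sum_congr rfl (fun i hi => (Finset.mem_filter.mp hi).2),
        Finset.sum_const, smul_eq_mul]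
    have hcard : t.card ≤ 2 := by
      have h1 : ∑ i ∈ t, x i ≤ C := by omega
      have h2 : t.card * C ≤ 2 * C := by omega
      exact Nat.le_of_mul_le_mul_right (by omega) hC
    have hft : ∑ i ∈ t, f (x i) = t.card * (C / k) := by
      rw [Finset.sum_congr rfl
        (fun i hi => hmid i (Finset.mem_of_mem_filter i hi) (Finset.mem_filter.mp hi).2),
        Finset.sum_const, smul_eq_mul]
    have hfu : ∑ i ∈ u, f (x i) = 2 * ∑ i ∈ u, x i / k := by
      rw [Finset.sum_congr rfl
        (fun i hi => hsmall i (Finset.mem_of_mem_filter i hi) (Finset.mem_filter.mp hi).2),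
        Finset.mul_sum]
    have hSdiv : ∑ i ∈ u, x i / k ≤ (∑ i ∈ u, x i) / k := sum_div_le' _ _ _
    set S := ∑ i ∈ u, x i with hS
    set m := t.card with hm
    rw [hft, hfu]
    -- 2*S + m*C ≤ 2*C
    have hkey : 2 * S + m * C ≤ 2 * C := by omega
    interval_cases m
    · have h1 : S ≤ C := by omega
      have : S / k ≤ C / k := Nat.div_le_div_right h1
      omega
    · have h1 : S + S ≤ C := by omega
      have h2 : S / k + S / k ≤ (S + S) / k := Nat.add_div_le_add_div _ _ _
      have h3 : (S + S) / k ≤ C / k := Nat.div_le_div_right h1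
      omega
    · have h1 : S = 0 := by omega
      have h2 : S / k = 0 := by simp [h1]
      omega
end

section
/- Let C and k be positive integers with 2k <= C, let N be a finite index set and (x_j)_{j∈N} a family of integers with 1 <= x_j <= C. Let J = {j ∈ N : k <= x_j and 2x_j <= C}, and for an integer t with 0 <= t <= C let z(t) = max{|T| : T ⊆ J, Σ_{j∈T} x_j <= t}. Define F(j) = z(C) - z(C - x_j) if 2x_j > C, F(j) = 1 if k <= x_j and 2x_j <= C, and F(j) = 0 if x_j < k. Then for every S ⊆ N with Σ_{j∈S} x_j <= C one has Σ_{j∈S} F(j) <= z(C). (This is the validity of the data-dependent dual feasible function f_1^k based on the cardinality knapsack problem.) -/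
theorem stmt_9 {ι : Type*} [DecidableEq ι] (C k : ℕ) (hk : 0 < k) (hkC : 2 * k ≤ C)
    (N : Finset ι) (x : ι → ℕ) (hx : ∀ j ∈ N, 1 ≤ x j ∧ x j ≤ C)
    (J : Finset ι) (hJ : J = N.filter (fun j => k ≤ x j ∧ 2 * x j ≤ C))
    (z : ℕ → ℕ)
    (hz1 : ∀ t ≤ C, ∃ T ⊆ J, (∑ j ∈ T, x j ≤ t ∧ T.card = z t))
    (hz2 : ∀ t ≤ C, ∀ T ⊆ J, ∑ j ∈ T, x j ≤ t → T.card ≤ z t)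
    (F : ι → ℕ)
    (hF : ∀ j, F j = if C < 2 * x j then z C - z (C - x j)
                     else if k ≤ x j then 1 else 0)
    (S : Finset ι) (hS : S ⊆ N) (hsum : ∑ j ∈ S, x j ≤ C) :
    ∑ j ∈ S, F j ≤ z C := by
  classical
  set B := S.filter (fun j => C < 2 * x j) with hB
  set T := S.filter (fun j => k ≤ x j ∧ 2 * x j ≤ C) with hT
  have hTJ : T ⊆ J := by
    rw [hJ, hT]
    intro j hj
    simp only [Finset.mem_filter] at hj ⊢
    exact ⟨hS hj.1, hj.2⟩
  -- split the sum
  have hsplit : ∑ j ∈ S, F j = ∑ j ∈ B, F j + T.card := by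
    have h1 : ∑ j ∈ S, F j = ∑ j ∈ B, F j + ∑ j ∈ S \ B, F j := by
      rw [add_comm, Finset.sum_sdiff (Finset.filter_subset _ _)]
    rw [h1]
    congr 1
    have h2 : ∑ j ∈ S \ B, F j = ∑ j ∈ (S \ B).filter (fun j => k ≤ x j), 1 := by
      rw [Finset.sum_filter]
      apply Finset.sum_congr rfl
      intro j hj
      rw [Finset.mem_sdiff, hB, Finset.mem_filter] at hj
      have hnb : ¬ C < 2 * x j := fun h => hj.2 ⟨hj.1, h⟩
      rw [hF j, if_neg hnb]
    rw [h2, Finset.sum_const, smul_eq_mul, mul_one]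
    congr 1
    rw [hT]
    ext j
    simp only [Finset.mem_filter, Finset.mem_sdiff, hB, not_and, not_lt]
    constructor
    · rintro ⟨⟨hjS, hnb⟩, hkx⟩
      exact ⟨hjS, hkx, hnb hjS⟩
    · rintro ⟨hjS, hkx, h2x⟩
      exact ⟨⟨hjS, fun _ => h2x⟩, hkx⟩
  -- B has at most one element
  have hBcard : B.card ≤ 1 := by
    rw [Finset.card_le_one]
    intro a ha b hb
    by_contra hne
    rw [hB, Finset.mem_filter] at ha hb
    have : x a + x b ≤ ∑ j ∈ S, x j := by
      have : ({a, b} : Finset ι) ⊆ S := by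
        intro c hc; simp at hc; rcases hc with rfl | rfl
        exacts [ha.1, hb.1]
      calc x a + x b = ∑ j ∈ ({a, b} : Finset ι), x j := by
            rw [Finset.sum_pair hne]
        _ ≤ ∑ j ∈ S, x j := Finset.sum_le_sum_of_subset this
    omega
  rw [hsplit]
  by_cases hBe : B = ∅
  · -- no big item
    rw [hBe, Finset.sum_empty, zero_add]
    apply hz2 C le_rfl T hTJ
    calc ∑ j ∈ T, x j ≤ ∑ j ∈ S, x j :=
          Finset.sum_le_sum_of_subset (Finset.filter_subset _ _)
      _ ≤ C := hsum
  · -- exactly one big item j₀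
    have hBne : B.Nonempty := Finset.nonempty_iff_ne_empty.mpr hBe
    obtain ⟨j₀, hBeq⟩ := Finset.card_eq_one.mp (le_antisymm hBcard hBne.card_pos)
    have hj₀ : j₀ ∈ S ∧ C < 2 * x j₀ := by
      have : j₀ ∈ B := by rw [hBeq]; exact Finset.mem_singleton_self j₀
      rw [hB, Finset.mem_filter] at this; exact this
    have hxC : x j₀ ≤ C := (hx j₀ (hS hj₀.1)).2
    -- T ⊆ S \ {j₀}
    have hTsub : T ⊆ S \ {j₀} := by
      intro j hj
      rw [hT, Finset.mem_filter] at hj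
      rw [Finset.mem_sdiff, Finset.mem_singleton]
      refine ⟨hj.1, fun h => ?_⟩
      subst h; omega
    have hTsum : ∑ j ∈ T, x j ≤ C - x j₀ := by
      have h1 : ∑ j ∈ T, x j ≤ ∑ j ∈ S \ {j₀}, x j :=
        Finset.sum_le_sum_of_subset hTsub
      have h2 := Finset.sum_sdiff (f := x) (Finset.singleton_subset_iff.mpr hj₀.1)
      rw [Finset.sum_singleton] at h2
      omega
    have hTcard : T.card ≤ z (C - x j₀) :=
      hz2 (C - x j₀) (Nat.sub_le _ _) T hTJ hTsum
    -- z (C - x j₀) ≤ z C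
    have hmono : z (C - x j₀) ≤ z C := by
      obtain ⟨T', hT'J, hT'sum, hT'card⟩ := hz1 (C - x j₀) (Nat.sub_le _ _)
      have := hz2 C le_rfl T' hT'J (hT'sum.trans (Nat.sub_le _ _))
      omega
    rw [hBeq, Finset.sum_singleton, hF j₀, if_pos hj₀.2]
    omega
end

section
/- Let N be a finite set of items that is packable into the bin of width W and height H, and let w̃, h̃ : N → ℝ≥0 be conservative scales, i.e., for every S ⊆ N: if Σ_{j∈S} w_j <= W then Σ_{j∈S} w̃_j <= W, and if Σ_{j∈S} h_j <= H then Σ_{j∈S} h̃_j <= H. Then Σ_{j∈N} w̃_j · h̃_j <= W·H. -/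
/-!
Rescale the widths first. Call `i` left of `j` when `x i + w i ≤ x j`, and place item `j` at
the largest `w̃`-width of a chain (for this order) of items left of `j`. Such a chain together
with `j` consists of disjoint intervals inside `[0, W]`, so its `w`-width is at most `W`, hence
by conservativity its `w̃`-width too: the rescaled item still fits. If `i` is left of `j`, a chain
left of `i` extends by `i` to a chain left of `j`, so `i` stays left of `j`; since two
rectangles of a packing either overlap in no `y`-interval or are separated horizontally, this
is again a packing. Rescaling the heights the same way gives a packing of the rescaled items,
whose total area is at most `W * H`.
-/

open Set MeasureTheory

theorem MeasureTheory.sum_measureReal_le_of_pairwiseDisjoint {α ι : Type*} [MeasurableSpace α]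
    {μ : Measure α} {s : Finset ι} {R : ι → Set α} {B : Set α}
    (hd : (s : Set ι).PairwiseDisjoint R) (hm : ∀ j ∈ s, MeasurableSet (R j))
    (hB : ∀ j ∈ s, R j ⊆ B) (hfin : μ B ≠ ⊤) :
    ∑ j ∈ s, μ.real (R j) ≤ μ.real B := by
  rw [← measureReal_biUnion_finset hd hm fun j hj => measure_ne_top_of_subset (hB j hj) hfin]
  exact measureReal_mono (iUnion₂_subset hB) hfin

theorem Real.volume_real_Ioo_add {a u : ℝ} (hu : 0 ≤ u) : volume.real (Ioo a (a + u)) = u := by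
  rw [Real.volume_real_Ioo_of_le (le_add_of_nonneg_right hu), add_sub_cancel_left]

theorem Ioo_add_disjoint_of_le_or_le {a b u v : ℝ} (h : a + u ≤ b ∨ b + v ≤ a) :
    Disjoint (Ioo a (a + u)) (Ioo b (b + v)) := by
  rw [Ioo_disjoint_Ioo]
  rcases h with h | h
  · exact (min_le_left _ _).trans (h.trans (le_max_right _ _))
  · exact (min_le_right _ _).trans (h.trans (le_max_left _ _))

theorem le_or_le_of_Ioo_add_disjoint {a b u v : ℝ} (hu : 0 < u) (hv : 0 < v)
    (h : Disjoint (Ioo a (a + u)) (Ioo b (b + v))) : a + u ≤ b ∨ b + v ≤ a := by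
  rw [Ioo_disjoint_Ioo, min_le_iff, le_max_iff, le_max_iff] at h
  rcases h with (h | h) | (h | h) <;> first | (left; linarith) | (right; linarith)

theorem sum_le_of_isChain {ι : Type*} {w x : ι → ℝ} {C : Finset ι} {t : ℝ}
    (hC : IsChain (fun i k => x i + w i ≤ x k) (C : Set ι)) (hw : ∀ i ∈ C, 0 ≤ w i)
    (hx : ∀ i ∈ C, 0 ≤ x i ∧ x i + w i ≤ t) (ht : 0 ≤ t) :
    ∑ i ∈ C, w i ≤ t := by
  have hd : (C : Set ι).PairwiseDisjoint fun i => Ioo (x i) (x i + w i) :=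
    fun i hi k hk hik => Ioo_add_disjoint_of_le_or_le (hC hi hk hik)
  have hsub : ∀ i ∈ C, Ioo (x i) (x i + w i) ⊆ Icc 0 t := fun i hi =>
    Ioo_subset_Icc_self.trans (Icc_subset_Icc (hx i hi).1 (hx i hi).2)
  calc ∑ i ∈ C, w i = ∑ i ∈ C, volume.real (Ioo (x i) (x i + w i)) :=
        Finset.sum_congr rfl fun i hi => (Real.volume_real_Ioo_add (hw i hi)).symm
    _ ≤ volume.real (Icc 0 t) :=
        sum_measureReal_le_of_pairwiseDisjoint hd (fun _ _ => measurableSet_Ioo) hsub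
          measure_Icc_lt_top.ne
    _ = t := by rw [Real.volume_real_Icc_of_le ht, sub_zero]

section Rescale

variable {ι : Type*} (w x w' : ι → ℝ) (N : Finset ι)

open Classical in
noncomputable def chainsEndingBy (t : ℝ) : Finset (Finset ι) :=
  N.powerset.filter fun C =>
    IsChain (fun i k => x i + w i ≤ x k) (C : Set ι) ∧ ∀ i ∈ C, x i + w i ≤ t

theorem empty_mem_chainsEndingBy (t : ℝ) : ∅ ∈ chainsEndingBy w x N t := by
  simp [chainsEndingBy]

noncomputable def maxChainWidth (t : ℝ) : ℝ :=
  (chainsEndingBy w x N t).sup' ⟨∅, empty_mem_chainsEndingBy w x N t⟩ fun C => ∑ i ∈ C, w' i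

variable {w x w' N}

theorem maxChainWidth_nonneg (t : ℝ) : 0 ≤ maxChainWidth w x w' N t :=
  Finset.sum_empty.ge.trans <|
    Finset.le_sup' (fun C => ∑ i ∈ C, w' i) (empty_mem_chainsEndingBy w x N t)

theorem maxChainWidth_add_le {i : ι} {t : ℝ} (hwi : 0 < w i) (hi : i ∈ N)
    (ht : x i + w i ≤ t) : maxChainWidth w x w' N (x i) + w' i ≤ maxChainWidth w x w' N t := by
  classical
  obtain ⟨C, hC, hCmax⟩ := Finset.exists_mem_eq_sup' ⟨∅, empty_mem_chainsEndingBy w x N (x i)⟩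
    fun C => ∑ i ∈ C, w' i
  simp only [chainsEndingBy, Finset.mem_filter, Finset.mem_powerset] at hC
  obtain ⟨hCN, hchain, hend⟩ := hC
  have hiC : i ∉ C := fun hiC => by linarith [hend i hiC]
  have hmem : insert i C ∈ chainsEndingBy w x N t := by
    simp only [chainsEndingBy, Finset.mem_filter, Finset.mem_powerset, Finset.coe_insert,
      Finset.forall_mem_insert]
    refine ⟨Finset.insert_subset hi hCN,
      hchain.insert fun k hk _ => Or.inr (hend k hk), ht, fun k hk => ?_⟩
    linarith [hend k hk]
  calc maxChainWidth w x w' N (x i) + w' i = ∑ k ∈ insert i C, w' k := by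
        rw [Finset.sum_insert hiC, add_comm, maxChainWidth, hCmax]
    _ ≤ maxChainWidth w x w' N t := Finset.le_sup' (fun C => ∑ k ∈ C, w' k) hmem

theorem maxChainWidth_le {W : ℝ} (hw : ∀ j ∈ N, 0 < w j)
    (hx : ∀ j ∈ N, 0 ≤ x j ∧ x j + w j ≤ W) (hW : 0 ≤ W)
    (hcs : ∀ S ⊆ N, ∑ j ∈ S, w j ≤ W → ∑ j ∈ S, w' j ≤ W) :
    maxChainWidth w x w' N W ≤ W := by
  refine Finset.sup'_le _ _ fun C hC => ?_
  simp only [chainsEndingBy, Finset.mem_filter, Finset.mem_powerset] at hC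
  obtain ⟨hCN, hchain, hend⟩ := hC
  exact hcs C hCN (sum_le_of_isChain hchain (fun i hi => (hw i (hCN hi)).le)
    (fun i hi => ⟨(hx i (hCN hi)).1, hend i hi⟩) hW)

end Rescale

section Packing

variable {ι : Type*} {w h : ι → ℝ} {W H : ℝ} {N : Finset ι} {x y : ι → ℝ}

theorem IsPacking.swap (hp : IsPacking w h W H N x y) : IsPacking h w H W N y x := by
  refine ⟨fun j hj => ?_, fun i hi j hj hij => ?_⟩
  · obtain ⟨hx0, hxW, hy0, hyH⟩ := hp.1 j hj
    exact ⟨hy0, hyH, hx0, hxW⟩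
  · have hd := hp.2 i hi j hj hij
    rw [disjoint_prod] at hd ⊢
    exact hd.symm

theorem IsPacking.exists_rescale_width (hp : IsPacking w h W H N x y) (hw : ∀ j ∈ N, 0 < w j)
    {w' : ι → ℝ} (hcs : ∀ S ⊆ N, ∑ j ∈ S, w j ≤ W → ∑ j ∈ S, w' j ≤ W) :
    ∃ x', IsPacking w' h W H N x' y := by
  obtain ⟨hb, hd⟩ := hp
  have hx : ∀ j ∈ N, 0 ≤ x j ∧ x j + w j ≤ W := fun j hj => ⟨(hb j hj).1, (hb j hj).2.1⟩
  have hmono : ∀ i ∈ N, ∀ j, x i + w i ≤ x j →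
      maxChainWidth w x w' N (x i) + w' i ≤ maxChainWidth w x w' N (x j) :=
    fun i hi j => maxChainWidth_add_le (hw i hi) hi
  refine ⟨fun j => maxChainWidth w x w' N (x j),
    fun j hj => ⟨maxChainWidth_nonneg _, ?_, (hb j hj).2.2⟩, fun i hi j hj hij => ?_⟩
  · have hW : 0 ≤ W := by linarith [hx j hj, hw j hj]
    exact (maxChainWidth_add_le (hw j hj) hj (hx j hj).2).trans (maxChainWidth_le hw hx hW hcs)
  · rcases disjoint_prod.mp (hd i hi j hj hij) with hdx | hdy
    · refine disjoint_prod.mpr (Or.inl (Ioo_add_disjoint_of_le_or_le ?_))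
      exact (le_or_le_of_Ioo_add_disjoint (hw i hi) (hw j hj) hdx).imp (hmono i hi j) (hmono j hj i)
    · exact disjoint_prod.mpr (Or.inr hdy)

theorem IsPacking.sum_mul_le (hp : IsPacking w h W H N x y) (hw : ∀ j ∈ N, 0 ≤ w j)
    (hh : ∀ j ∈ N, 0 ≤ h j) (hW : 0 ≤ W) (hH : 0 ≤ H) :
    ∑ j ∈ N, w j * h j ≤ W * H := by
  obtain ⟨hb, hd⟩ := hp
  have hsub : ∀ j ∈ N, Ioo (x j) (x j + w j) ×ˢ Ioo (y j) (y j + h j) ⊆ Icc 0 W ×ˢ Icc 0 H :=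
    fun j hj => by
      obtain ⟨hx0, hxW, hy0, hyH⟩ := hb j hj
      exact prod_mono (Ioo_subset_Icc_self.trans (Icc_subset_Icc hx0 hxW))
        (Ioo_subset_Icc_self.trans (Icc_subset_Icc hy0 hyH))
  calc ∑ j ∈ N, w j * h j
      = ∑ j ∈ N, volume.real (Ioo (x j) (x j + w j) ×ˢ Ioo (y j) (y j + h j)) :=
        Finset.sum_congr rfl fun j hj => by
          rw [Measure.volume_eq_prod, measureReal_prod_prod, Real.volume_real_Ioo_add (hw j hj),
            Real.volume_real_Ioo_add (hh j hj)]
    _ ≤ volume.real (Icc (0 : ℝ) W ×ˢ Icc (0 : ℝ) H) :=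
        sum_measureReal_le_of_pairwiseDisjoint hd
          (fun _ _ => measurableSet_Ioo.prod measurableSet_Ioo) hsub
          (isCompact_Icc.prod isCompact_Icc).measure_lt_top.ne
    _ = W * H := by
      rw [Measure.volume_eq_prod, measureReal_prod_prod, Real.volume_real_Icc_of_le hW,
        Real.volume_real_Icc_of_le hH, sub_zero, sub_zero]

end Packing

theorem stmt_10_general {ι : Type*} (w h : ι → ℝ) (W H : ℝ)
    (hW : 0 < W) (hH : 0 < H) (hw : ∀ j, 0 < w j) (hh : ∀ j, 0 < h j)
    (N : Finset ι) (hN : Packable w h W H N)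
    (w' h' : ι → ℝ) (hw' : ∀ j ∈ N, 0 ≤ w' j) (hh' : ∀ j ∈ N, 0 ≤ h' j)
    (hcsW : ∀ S ⊆ N, ∑ j ∈ S, w j ≤ W → ∑ j ∈ S, w' j ≤ W)
    (hcsH : ∀ S ⊆ N, ∑ j ∈ S, h j ≤ H → ∑ j ∈ S, h' j ≤ H) :
    ∑ j ∈ N, w' j * h' j ≤ W * H := by
  obtain ⟨x, y, hp⟩ := hN
  obtain ⟨x', hp'⟩ := hp.exists_rescale_width (fun j _ => hw j) hcsW
  obtain ⟨y', hp''⟩ := hp'.swap.exists_rescale_width (fun j _ => hh j) hcsH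
  exact hp''.swap.sum_mul_le hw' hh' hW.le hH.le

theorem stmt_10 {ι : Type*} [DecidableEq ι] (w h : ι → ℝ) (W H : ℝ)
    (hW : 0 < W) (hH : 0 < H) (hw : ∀ j, 0 < w j) (hh : ∀ j, 0 < h j)
    (N : Finset ι) (hN : Packable w h W H N)
    (w' h' : ι → ℝ) (hw' : ∀ j ∈ N, 0 ≤ w' j) (hh' : ∀ j ∈ N, 0 ≤ h' j)
    (hcsW : ∀ S ⊆ N, ∑ j ∈ S, w j ≤ W → ∑ j ∈ S, w' j ≤ W)
    (hcsH : ∀ S ⊆ N, ∑ j ∈ S, h j ≤ H → ∑ j ∈ S, h' j ≤ H) :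
    ∑ j ∈ N, w' j * h' j ≤ W * H :=
  stmt_10_general w h W H hW hH hw hh N hN w' h' hw' hh' hcsW hcsH
end

section
/- Let f1 : [0, W] → ℝ≥0 satisfy: for every finite family (u_i) of reals in [0, W] with Σ_i u_i <= W, Σ_i f1(u_i) <= f1(W); and let f2 : [0, H] → ℝ≥0 satisfy the analogous property with respect to H. If a finite set N of items (with w_j <= W and h_j <= H for all j) is packable into the bin of width W and height H, then Σ_{j∈N} f1(w_j)·f2(h_j) <= f1(W)·f2(H). (This is the validity of the two-dimensional lower bound and of the valid inequalities obtained from products of two dual feasible functions.) -/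
set_option linter.unusedSectionVars false
set_option maxHeartbeats 800000

section aux
variable {ι : Type*} [DecidableEq ι]

variable {ι : Type*} [DecidableEq ι]

lemma sum_len_le (s e : ι → ℝ) (C : ℝ) (hC : 0 ≤ C) (S : Finset ι)
    (hse : ∀ j ∈ S, s j ≤ e j)
    (h0 : ∀ j ∈ S, 0 ≤ s j) (h1 : ∀ j ∈ S, e j ≤ C)
    (hd : ∀ i ∈ S, ∀ j ∈ S, i ≠ j → Disjoint (Set.Ioo (s i) (e i)) (Set.Ioo (s j) (e j))) :
    ∑ j ∈ S, (e j - s j) ≤ C := by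
  have hm : ∀ j ∈ S, MeasurableSet (Set.Ioo (s j) (e j)) := fun j _ => measurableSet_Ioo
  have hpw : (↑S : Set ι).Pairwise (Function.onFun Disjoint fun j => Set.Ioo (s j) (e j)) := by
    intro i hi j hj hij
    exact hd i hi j hj hij
  have hvol := MeasureTheory.measure_biUnion_finset hpw hm (μ := MeasureTheory.volume)
  have hsub : (⋃ j ∈ S, Set.Ioo (s j) (e j)) ⊆ Set.Icc 0 C := by
    intro z hz
    simp only [Set.mem_iUnion] at hz
    obtain ⟨j, hj, hzj⟩ := hz
    exact ⟨le_of_lt (lt_of_le_of_lt (h0 j hj) hzj.1), le_trans hzj.2.le (h1 j hj)⟩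
  have hle : ∑ j ∈ S, MeasureTheory.volume (Set.Ioo (s j) (e j)) ≤ ENNReal.ofReal C := by
    rw [← hvol]
    calc MeasureTheory.volume (⋃ j ∈ S, Set.Ioo (s j) (e j))
        ≤ MeasureTheory.volume (Set.Icc 0 C) := MeasureTheory.measure_mono hsub
      _ = ENNReal.ofReal C := by rw [Real.volume_Icc, sub_zero]
  have hkey : ENNReal.ofReal (∑ j ∈ S, (e j - s j)) ≤ ENNReal.ofReal C := by
    rw [ENNReal.ofReal_sum_of_nonneg (fun j hj => sub_nonneg.2 (hse j hj))]
    simpa [Real.volume_Ioo] using hle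
  exact (ENNReal.ofReal_le_ofReal_iff hC).1 hkey

lemma dff_finset (f : ℝ → ℝ) (Wc : ℝ)
    (hf : ∀ (m : ℕ) (u : Fin m → ℝ), (∀ i, 0 ≤ u i ∧ u i ≤ Wc) → (∑ i, u i ≤ Wc) →
      ∑ i, f (u i) ≤ f Wc)
    (S : Finset ι) (g : ι → ℝ) (hg : ∀ j ∈ S, 0 ≤ g j ∧ g j ≤ Wc)
    (hsum : ∑ j ∈ S, g j ≤ Wc) : ∑ j ∈ S, f (g j) ≤ f Wc := by
  have key : ∀ (v : ι → ℝ), ∑ i : Fin S.card, v ((S.equivFin.symm i) : ι) = ∑ j ∈ S, v j := by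
    intro v
    rw [← Finset.sum_coe_sort S v]
    exact Equiv.sum_comp S.equivFin.symm (fun j : ↥S => v ↑j)
  have h1 := hf S.card (fun i => g ((S.equivFin.symm i) : ι))
    (fun i => hg _ (S.equivFin.symm i).2) (by rw [key]; exact hsum)
  calc ∑ j ∈ S, f (g j) = ∑ i : Fin S.card, f (g ((S.equivFin.symm i) : ι)) :=
        (key (fun j => f (g j))).symm
    _ ≤ f Wc := h1

variable {ι : Type*} [DecidableEq ι]

lemma cover (s e : ι → ℝ) (a : ι → ℕ) (A : ℕ) (N : Finset ι)
    (hse : ∀ j ∈ N, s j < e j) (ha1 : ∀ j ∈ N, 1 ≤ a j)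
    (hload : ∀ x : ℝ, ∑ j ∈ N.filter (fun j => x ∈ Set.Ioo (s j) (e j)), a j ≤ A) :
    ∀ (n : ℕ) (b : ℝ), (N.filter (fun j => b ≤ s j)).card ≤ n →
      ∃ S ⊆ N.filter (fun j => b ≤ s j),
        (∀ i ∈ S, ∀ j ∈ S, i ≠ j → Disjoint (Set.Ioo (s i) (e i)) (Set.Ioo (s j) (e j))) ∧
        ∀ x : ℝ, A ≤ ∑ j ∈ N.filter (fun j => x ∈ Set.Ioo (s j) (e j)), a j →
          (∃ k ∈ N, b ≤ s k ∧ x ∈ Set.Ioo (s k) (e k)) →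
          ∃ j ∈ S, x ∈ Set.Ioo (s j) (e j) := by
  intro n
  induction n with
  | zero =>
    intro b hb
    refine ⟨∅, Finset.empty_subset _, by simp, ?_⟩
    rintro x _ ⟨k, hk, hbk, hxk⟩
    exfalso
    have hmem : k ∈ N.filter (fun j => b ≤ s j) := Finset.mem_filter.2 ⟨hk, hbk⟩
    rw [Finset.card_eq_zero.1 (Nat.le_zero.1 hb)] at hmem
    exact absurd hmem (Finset.notMem_empty k)
  | succ n ih =>
    intro b hb
    by_cases hF : (N.filter (fun j => b ≤ s j)).Nonempty
    case neg =>
      refine ⟨∅, Finset.empty_subset _, by simp, ?_⟩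
      rintro x _ ⟨k, hk, hbk, hxk⟩
      exact absurd ⟨k, Finset.mem_filter.2 ⟨hk, hbk⟩⟩ hF
    case pos =>
      set F := N.filter (fun j => b ≤ s j) with hFdef
      have hFim : (F.image s).Nonempty := hF.image s
      obtain ⟨j1, hj1F, hsj1⟩ : ∃ j1 ∈ F, s j1 = (F.image s).min' hFim := by
        have := (F.image s).min'_mem hFim
        obtain ⟨j1, hj1, hj1s⟩ := Finset.mem_image.1 this
        exact ⟨j1, hj1, hj1s⟩
      have hj1N : j1 ∈ N := (Finset.mem_filter.1 hj1F).1
      have hbj1 : b ≤ s j1 := (Finset.mem_filter.1 hj1F).2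
      have hsej1 : s j1 < e j1 := hse j1 hj1N
      -- recursive call with barrier e j1
      have hsub' : N.filter (fun j => e j1 ≤ s j) ⊆ F.erase j1 := by
        intro j hj
        obtain ⟨hjN, hjs⟩ := Finset.mem_filter.1 hj
        refine Finset.mem_erase.2 ⟨?_, Finset.mem_filter.2 ⟨hjN, by linarith⟩⟩
        intro hjj1
        rw [hjj1] at hjs
        linarith
      have hcard' : (N.filter (fun j => e j1 ≤ s j)).card ≤ n := by
        have h1 := Finset.card_le_card hsub'
        have h2 := Finset.card_erase_of_mem hj1F
        have h3 : 1 ≤ F.card := Finset.card_pos.2 hF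
        omega
      obtain ⟨S', hS'sub, hS'disj, hS'cov⟩ := ih (e j1) hcard'
      have hS'F : ∀ j ∈ S', e j1 ≤ s j := fun j hj => (Finset.mem_filter.1 (hS'sub hj)).2
      have hS'N : ∀ j ∈ S', j ∈ N := fun j hj => (Finset.mem_filter.1 (hS'sub hj)).1
      refine ⟨insert j1 S', ?_, ?_, ?_⟩
      · refine Finset.insert_subset hj1F ?_
        intro j hj
        exact Finset.mem_filter.2 ⟨hS'N j hj, by linarith [hS'F j hj]⟩
      · have hd1 : ∀ j ∈ S', Disjoint (Set.Ioo (s j1) (e j1)) (Set.Ioo (s j) (e j)) := by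
          intro j hj
          rw [Set.disjoint_left]
          intro z hz1 hz2
          have := hS'F j hj
          exact absurd hz2.1 (by linarith [hz1.2])
        intro i hi j hj hij
        rcases Finset.mem_insert.1 hi with hi1 | hiS <;>
          rcases Finset.mem_insert.1 hj with hj1' | hjS
        · exact absurd (hi1.trans hj1'.symm) hij
        · rw [hi1]; exact hd1 j hjS
        · rw [hj1']; exact (hd1 i hiS).symm
        · exact hS'disj i hiS j hjS hij
      · rintro x hx ⟨k, hkN, hbk, hxk⟩
        by_cases hx1 : x ∈ Set.Ioo (s j1) (e j1)
        · exact ⟨j1, Finset.mem_insert_self _ _, hx1⟩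
        rcases le_or_gt x (s j1) with hxle | hxgt
        · exfalso
          have hkF : k ∈ F := Finset.mem_filter.2 ⟨hkN, hbk⟩
          have : (F.image s).min' hFim ≤ s k :=
            Finset.min'_le _ _ (Finset.mem_image_of_mem s hkF)
          rw [hsj1] at hxle
          linarith [hxk.1]
        · have hxe : e j1 ≤ x := by
            by_contra hcon
            exact hx1 ⟨hxgt, lt_of_not_ge hcon⟩
          by_cases hk' : ∃ k' ∈ N, e j1 ≤ s k' ∧ x ∈ Set.Ioo (s k') (e k')
          · obtain ⟨j, hjS', hxj⟩ := hS'cov x hx hk'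
            exact ⟨j, Finset.mem_insert_of_mem hjS', hxj⟩
          · exfalso
            push_neg at hk'
            set T := N.filter (fun j => x ∈ Set.Ioo (s j) (e j)) with hTdef
            have hTs : ∀ k' ∈ T, s k' < e j1 := by
              intro k' hk'T
              obtain ⟨hk'N, hxk'⟩ := Finset.mem_filter.1 hk'T
              by_contra hcon
              exact absurd hxk' (hk' k' hk'N (le_of_not_gt hcon))
            have hins : (insert (s j1) (T.image s)).Nonempty := ⟨s j1, Finset.mem_insert_self _ _⟩
            set M := (insert (s j1) (T.image s)).max' hins with hMdef
            have hMlt : M < e j1 := by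
              apply Finset.max'_lt_iff _ hins |>.2
              intro yv hyv
              rcases Finset.mem_insert.1 hyv with h | h
              · rw [h]; exact hsej1
              · obtain ⟨k', hk'T, hk's⟩ := Finset.mem_image.1 h
                rw [← hk's]; exact hTs k' hk'T
            set yy := (M + e j1) / 2 with hyydef
            have hMyy : M < yy := by rw [hyydef]; linarith
            have hyylt : yy < e j1 := by rw [hyydef]; linarith
            have hsj1M : s j1 ≤ M := Finset.le_max' _ _ (Finset.mem_insert_self _ _)
            have hy1 : yy ∈ Set.Ioo (s j1) (e j1) := ⟨by linarith, hyylt⟩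
            have hyT : ∀ k' ∈ T, yy ∈ Set.Ioo (s k') (e k') := by
              intro k' hk'T
              obtain ⟨hk'N, hxk'⟩ := Finset.mem_filter.1 hk'T
              have hsM : s k' ≤ M :=
                Finset.le_max' _ _ (Finset.mem_insert_of_mem (Finset.mem_image_of_mem s hk'T))
              exact ⟨by linarith, by linarith [hxk'.2]⟩
            have hj1T : j1 ∉ T := fun hmem => hx1 (Finset.mem_filter.1 hmem).2
            have hsubset : insert j1 T ⊆ N.filter (fun j => yy ∈ Set.Ioo (s j) (e j)) := by
              refine Finset.insert_subset (Finset.mem_filter.2 ⟨hj1N, hy1⟩) ?_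
              intro k' hk'T
              exact Finset.mem_filter.2 ⟨(Finset.mem_filter.1 hk'T).1, hyT k' hk'T⟩
            have h1 : A + 1 ≤ ∑ j ∈ insert j1 T, a j := by
              rw [Finset.sum_insert hj1T]
              have := ha1 j1 hj1N
              omega
            have h2 : ∑ j ∈ insert j1 T, a j
                ≤ ∑ j ∈ N.filter (fun j => yy ∈ Set.Ioo (s j) (e j)), a j :=
              Finset.sum_le_sum_of_subset hsubset
            have h3 := hload yy
            omega

variable {ι : Type*} [DecidableEq ι]

lemma intlem (s e : ι → ℝ) (N : Finset ι) (hse : ∀ j ∈ N, s j < e j)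
    (c : ι → ℝ) (C : ℝ)
    (hc : ∀ S ⊆ N, (∀ i ∈ S, ∀ j ∈ S, i ≠ j →
        Disjoint (Set.Ioo (s i) (e i)) (Set.Ioo (s j) (e j))) → ∑ j ∈ S, c j ≤ C) :
    ∀ (A : ℕ) (a : ι → ℕ),
      (∀ x : ℝ, ∑ j ∈ N.filter (fun j => x ∈ Set.Ioo (s j) (e j)), a j ≤ A) →
      ∑ j ∈ N, (a j : ℝ) * c j ≤ (A : ℝ) * C := by
  intro A
  induction A with
  | zero =>
    intro a hload
    have hz : ∀ j ∈ N, a j = 0 := by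
      intro j hj
      have hmid : (s j + e j) / 2 ∈ Set.Ioo (s j) (e j) :=
        ⟨by linarith [hse j hj], by linarith [hse j hj]⟩
      have h1 := hload ((s j + e j) / 2)
      have hjmem : j ∈ N.filter (fun k => (s j + e j) / 2 ∈ Set.Ioo (s k) (e k)) :=
        Finset.mem_filter.2 ⟨hj, hmid⟩
      have h2 := Finset.single_le_sum (f := a) (fun i _ => Nat.zero_le _) hjmem
      omega
    have : ∑ j ∈ N, (a j : ℝ) * c j = 0 :=
      Finset.sum_eq_zero (fun j hj => by rw [hz j hj]; simp)
    rw [this]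
    simp
  | succ A ih =>
    intro a hload
    set Np := N.filter (fun j => 1 ≤ a j) with hNpdef
    have hNpN : Np ⊆ N := Finset.filter_subset _ _
    have hsums : ∀ x : ℝ, ∑ j ∈ Np.filter (fun j => x ∈ Set.Ioo (s j) (e j)), a j
        = ∑ j ∈ N.filter (fun j => x ∈ Set.Ioo (s j) (e j)), a j := by
      intro x
      apply Finset.sum_subset
      · exact Finset.filter_subset_filter _ hNpN
      · intro j hjN hjnot
        have hjmem := Finset.mem_filter.1 hjN
        by_contra hne
        exact hjnot (Finset.mem_filter.2 ⟨Finset.mem_filter.2 ⟨hjmem.1, by omega⟩, hjmem.2⟩)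
    have hins : (insert (0:ℝ) (Np.image s)).Nonempty := ⟨0, Finset.mem_insert_self _ _⟩
    set b := (insert (0:ℝ) (Np.image s)).min' hins with hbdef
    have hble : ∀ k ∈ Np, b ≤ s k := fun k hk =>
      Finset.min'_le _ _ (Finset.mem_insert_of_mem (Finset.mem_image_of_mem s hk))
    obtain ⟨S, hSsub, hSdisj, hScov⟩ := cover s e a (A + 1) Np
      (fun j hj => hse j (hNpN hj)) (fun j hj => (Finset.mem_filter.1 hj).2)
      (fun x => (hsums x) ▸ hload x)
      (Np.filter (fun j => b ≤ s j)).card b le_rfl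
    have hSNp : ∀ j ∈ S, j ∈ Np := fun j hj => (Finset.mem_filter.1 (hSsub hj)).1
    have hSN : S ⊆ N := fun j hj => hNpN (hSNp j hj)
    have hSa : ∀ j ∈ S, 1 ≤ a j := fun j hj => (Finset.mem_filter.1 (hSNp j hj)).2
    set a' := fun j => a j - (if j ∈ S then 1 else 0) with ha'def
    have hload' : ∀ x : ℝ, ∑ j ∈ N.filter (fun j => x ∈ Set.Ioo (s j) (e j)), a' j ≤ A := by
      intro x
      set F := N.filter (fun j => x ∈ Set.Ioo (s j) (e j)) with hFdef
      by_cases hcov : ∃ j0 ∈ S, x ∈ Set.Ioo (s j0) (e j0)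
      · obtain ⟨j0, hj0S, hxj0⟩ := hcov
        have hj0F : j0 ∈ F := Finset.mem_filter.2 ⟨hSN hj0S, hxj0⟩
        have h1 : 1 ≤ a j0 := hSa j0 hj0S
        have key : ∑ j ∈ F, a' j + 1 ≤ ∑ j ∈ F, a j := by
          rw [← Finset.add_sum_erase F a' hj0F, ← Finset.add_sum_erase F a hj0F]
          have heq : a' j0 + 1 = a j0 := by simp only [ha'def, if_pos hj0S]; omega
          have h2 : ∑ j ∈ F.erase j0, a' j ≤ ∑ j ∈ F.erase j0, a j :=
            Finset.sum_le_sum (fun i _ => Nat.sub_le _ _)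
          omega
        have h3 := hload x
        rw [← hFdef] at h3
        omega
      · have hFA : ∑ j ∈ F, a j ≤ A := by
          by_contra hgt
          have hge : A + 1 ≤ ∑ j ∈ F, a j := by omega
          have hge' : A + 1 ≤ ∑ j ∈ Np.filter (fun j => x ∈ Set.Ioo (s j) (e j)), a j := by
            rw [hsums x]; exact hge
          have hne : (Np.filter (fun j => x ∈ Set.Ioo (s j) (e j))).Nonempty := by
            by_contra hemp
            rw [Finset.not_nonempty_iff_eq_empty.1 hemp] at hge'
            simp at hge'
          obtain ⟨k, hk⟩ := hne
          obtain ⟨hkNp, hxk⟩ := Finset.mem_filter.1 hk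
          exact hcov (hScov x hge' ⟨k, hkNp, hble k hkNp, hxk⟩)
        calc ∑ j ∈ F, a' j ≤ ∑ j ∈ F, a j := Finset.sum_le_sum (fun i _ => Nat.sub_le _ _)
          _ ≤ A := hFA
    have hIH := ih a' hload'
    have hSc := hc S hSN hSdisj
    have hsplit : ∀ j ∈ N, (a j : ℝ) * c j = (a' j : ℝ) * c j + (if j ∈ S then c j else 0) := by
      intro j hj
      by_cases hjS : j ∈ S
      · have h1 : 1 ≤ a j := hSa j hjS
        have : a' j = a j - 1 := by simp [ha'def, hjS]
        rw [this, if_pos hjS, Nat.cast_sub h1]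
        push_cast
        ring
      · simp [ha'def, hjS]
    calc ∑ j ∈ N, (a j : ℝ) * c j
        = ∑ j ∈ N, ((a' j : ℝ) * c j + (if j ∈ S then c j else 0)) :=
          Finset.sum_congr rfl hsplit
      _ = ∑ j ∈ N, (a' j : ℝ) * c j + ∑ j ∈ N, (if j ∈ S then c j else 0) :=
          Finset.sum_add_distrib
      _ = ∑ j ∈ N, (a' j : ℝ) * c j + ∑ j ∈ S, c j := by
          rw [Finset.sum_ite_mem, Finset.inter_eq_right.2 hSN]
      _ ≤ (A : ℝ) * C + C := add_le_add hIH hSc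
      _ = ((A + 1 : ℕ) : ℝ) * C := by push_cast; ring

variable {ι : Type*} [DecidableEq ι]

lemma reallem (s e : ι → ℝ) (N : Finset ι) (hse : ∀ j ∈ N, s j < e j)
    (c : ι → ℝ) (C : ℝ) (hc0 : ∀ j ∈ N, 0 ≤ c j) (hC : 0 ≤ C)
    (hc : ∀ S ⊆ N, (∀ i ∈ S, ∀ j ∈ S, i ≠ j →
        Disjoint (Set.Ioo (s i) (e i)) (Set.Ioo (s j) (e j))) → ∑ j ∈ S, c j ≤ C)
    (a : ι → ℝ) (A : ℝ) (ha0 : ∀ j ∈ N, 0 ≤ a j) (hA0 : 0 ≤ A)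
    (hload : ∀ x : ℝ, ∑ j ∈ N.filter (fun j => x ∈ Set.Ioo (s j) (e j)), a j ≤ A) :
    ∑ j ∈ N, a j * c j ≤ A * C := by
  refine le_of_forall_pos_le_add ?_
  intro ε hε
  obtain ⟨q0, hq0⟩ := exists_nat_gt (((1 + (N.card : ℝ)) * C) / ε)
  set q := q0 + 1 with hqdef
  have hq : 0 < (q : ℝ) := by positivity
  have hqgt : ((1 + (N.card : ℝ)) * C) / ε < (q : ℝ) := by
    refine lt_of_lt_of_le hq0 ?_
    exact_mod_cast Nat.le_succ q0
  set na := fun j => ⌈a j * q⌉₊ with hnadef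
  set A' := ⌈A * q⌉₊ + N.card with hA'def
  have hloadn : ∀ x : ℝ, ∑ j ∈ N.filter (fun j => x ∈ Set.Ioo (s j) (e j)), na j ≤ A' := by
    intro x
    set F := N.filter (fun j => x ∈ Set.Ioo (s j) (e j)) with hFdef
    have hFN : F ⊆ N := Finset.filter_subset _ _
    have hreal : ((∑ j ∈ F, na j : ℕ) : ℝ) ≤ (A' : ℝ) := by
      push_cast
      calc ∑ j ∈ F, ((na j : ℕ) : ℝ)
          ≤ ∑ j ∈ F, (a j * q + 1) := by
            refine Finset.sum_le_sum (fun j hj => ?_)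
            exact (Nat.ceil_lt_add_one (mul_nonneg (ha0 j (hFN hj)) hq.le)).le
        _ = (∑ j ∈ F, a j) * q + F.card := by
            rw [Finset.sum_add_distrib, ← Finset.sum_mul]
            simp
        _ ≤ A * q + (N.card : ℝ) := by
            have h1 : (F.card : ℝ) ≤ (N.card : ℝ) := by
              exact_mod_cast Finset.card_filter_le _ _
            have h2 := hload x
            rw [← hFdef] at h2
            nlinarith
        _ ≤ (⌈A * q⌉₊ : ℝ) + (N.card : ℝ) := by
            linarith [Nat.le_ceil (A * q)]
        _ = (A' : ℝ) := by rw [hA'def]; push_cast; ring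
    exact_mod_cast hreal
  have hint := intlem s e N hse c C hc A' na hloadn
  have hkey : (∑ j ∈ N, a j * c j) * q ≤ (A * q + (1 + (N.card : ℝ))) * C := by
    calc (∑ j ∈ N, a j * c j) * q = ∑ j ∈ N, (a j * q) * c j := by
          rw [Finset.sum_mul]; exact Finset.sum_congr rfl (fun j _ => by ring)
      _ ≤ ∑ j ∈ N, (na j : ℝ) * c j := by
          refine Finset.sum_le_sum (fun j hj => ?_)
          exact mul_le_mul_of_nonneg_right (Nat.le_ceil _) (hc0 j hj)
      _ ≤ (A' : ℝ) * C := hint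
      _ ≤ (A * q + (1 + (N.card : ℝ))) * C := by
          refine mul_le_mul_of_nonneg_right ?_ hC
          have := (Nat.ceil_lt_add_one (mul_nonneg hA0 hq.le)).le
          rw [hA'def]
          push_cast at this ⊢
          linarith
  have h2 : ∑ j ∈ N, a j * c j ≤ A * C + ((1 + (N.card : ℝ)) * C) / q := by
    rw [← sub_nonneg]
    have h3 : A * C + ((1 + (N.card : ℝ)) * C) / q - ∑ j ∈ N, a j * c j
        = ((A * q + (1 + (N.card : ℝ))) * C - (∑ j ∈ N, a j * c j) * q) / q := by
      field_simp
    rw [h3]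
    exact div_nonneg (by linarith) hq.le
  have h4 : ((1 + (N.card : ℝ)) * C) / q < ε := by
    rw [div_lt_iff₀ hq]
    rw [div_lt_iff₀ hε] at hqgt
    linarith
  linarith

end aux

theorem stmt_12 {ι : Type*} [DecidableEq ι] (w h : ι → ℝ) (W H : ℝ)
    (hW : 0 < W) (hH : 0 < H) (hw : ∀ j, 0 < w j) (hh : ∀ j, 0 < h j)
    (f1 f2 : ℝ → ℝ)
    (hf1nn : ∀ u, 0 ≤ u → u ≤ W → 0 ≤ f1 u)
    (hf2nn : ∀ u, 0 ≤ u → u ≤ H → 0 ≤ f2 u)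
    (hf1 : ∀ (m : ℕ) (u : Fin m → ℝ),
        (∀ i, 0 ≤ u i ∧ u i ≤ W) → (∑ i, u i ≤ W) → ∑ i, f1 (u i) ≤ f1 W)
    (hf2 : ∀ (m : ℕ) (u : Fin m → ℝ),
        (∀ i, 0 ≤ u i ∧ u i ≤ H) → (∑ i, u i ≤ H) → ∑ i, f2 (u i) ≤ f2 H)
    (N : Finset ι) (hwle : ∀ j ∈ N, w j ≤ W) (hhle : ∀ j ∈ N, h j ≤ H)
    (hN : Packable w h W H N) :
    ∑ j ∈ N, f1 (w j) * f2 (h j) ≤ f1 W * f2 H := by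
  obtain ⟨x, y, hin, hdisj⟩ := hN
  have hf1W : 0 ≤ f1 W := hf1nn W hW.le le_rfl
  have hf2H : 0 ≤ f2 H := hf2nn H hH.le le_rfl
  have hse : ∀ j ∈ N, x j < x j + w j := fun j _ => by linarith [hw j]
  have hc : ∀ S ⊆ N, (∀ i ∈ S, ∀ j ∈ S, i ≠ j →
      Disjoint (Set.Ioo (x i) (x i + w i)) (Set.Ioo (x j) (x j + w j))) →
      ∑ j ∈ S, f1 (w j) ≤ f1 W := by
    intro S hSN hSd
    have hwsum : ∑ j ∈ S, w j ≤ W := by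
      have hlen := sum_len_le x (fun j => x j + w j) W hW.le S
        (fun j _ => by show x j ≤ x j + w j; linarith [hw j]) (fun j hj => (hin j (hSN hj)).1)
        (fun j hj => (hin j (hSN hj)).2.1) hSd
      simpa using hlen
    exact dff_finset f1 W hf1 S w (fun j hj => ⟨(hw j).le, hwle j (hSN hj)⟩) hwsum
  have hload : ∀ t : ℝ, ∑ j ∈ N.filter (fun j => t ∈ Set.Ioo (x j) (x j + w j)), f2 (h j)
      ≤ f2 H := by
    intro t
    set T := N.filter (fun j => t ∈ Set.Ioo (x j) (x j + w j)) with hTdef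
    have hTN : T ⊆ N := Finset.filter_subset _ _
    have hyd : ∀ i ∈ T, ∀ j ∈ T, i ≠ j →
        Disjoint (Set.Ioo (y i) (y i + h i)) (Set.Ioo (y j) (y j + h j)) := by
      intro i hi j hj hij
      rw [Set.disjoint_left]
      intro z hzi hzj
      have hti : t ∈ Set.Ioo (x i) (x i + w i) := (Finset.mem_filter.1 hi).2
      have htj : t ∈ Set.Ioo (x j) (x j + w j) := (Finset.mem_filter.1 hj).2
      have hd := hdisj i (hTN hi) j (hTN hj) hij
      exact Set.disjoint_left.1 hd (Set.mk_mem_prod hti hzi) (Set.mk_mem_prod htj hzj)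
    have hhsum : ∑ j ∈ T, h j ≤ H := by
      have hlen := sum_len_le y (fun j => y j + h j) H hH.le T
        (fun j _ => by show y j ≤ y j + h j; linarith [hh j]) (fun j hj => (hin j (hTN hj)).2.2.1)
        (fun j hj => (hin j (hTN hj)).2.2.2) hyd
      simpa using hlen
    exact dff_finset f2 H hf2 T h (fun j hj => ⟨(hh j).le, hhle j (hTN hj)⟩) hhsum
  have hmain := reallem x (fun j => x j + w j) N hse (fun j => f1 (w j)) (f1 W)
    (fun j hj => hf1nn _ (hw j).le (hwle j hj)) hf1W hc
    (fun j => f2 (h j)) (f2 H) (fun j hj => hf2nn _ (hh j).le (hhle j hj)) hf2H hload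
  calc ∑ j ∈ N, f1 (w j) * f2 (h j) = ∑ j ∈ N, f2 (h j) * f1 (w j) := by
        exact Finset.sum_congr rfl (fun j _ => mul_comm _ _)
    _ ≤ f2 H * f1 W := hmain
    _ = f1 W * f2 H := mul_comm _ _
end

section
/- If a finite set S of items is packable into the bin of width W and height H, then there exists a packing of S into the same bin in which, for every item j ∈ S, the x-coordinate x_j equals Σ_{k∈T_j} w_k for some subset T_j ⊆ S \ {j} and the y-coordinate y_j equals Σ_{k∈U_j} h_k for some subset U_j ⊆ S \ {j}. (Existence of a packing on normal patterns.) -/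
/-- Separation predicate: the open rectangles of `i` and `j` are disjoint because they
are separated horizontally or vertically. -/
def RectSep {ι : Type*} (w h x y : ι → ℝ) (i j : ι) : Prop :=
  x i + w i ≤ x j ∨ x j + w j ≤ x i ∨ y i + h i ≤ y j ∨ y j + h j ≤ y i

lemma sep_swap {ι : Type*} {w h x y : ι → ℝ} {i j : ι} :
    RectSep w h x y i j ↔ RectSep h w y x i j := by unfold RectSep; tauto

lemma sep_comm {ι : Type*} {w h x y : ι → ℝ} {i j : ι} :
    RectSep w h x y i j ↔ RectSep w h x y j i := by unfold RectSep; tauto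

lemma disjoint_iff_sep {ι : Type*} {w h x y : ι → ℝ} {i j : ι}
    (hwi : 0 < w i) (hwj : 0 < w j) (hhi : 0 < h i) (hhj : 0 < h j) :
    Disjoint (Set.Ioo (x i) (x i + w i) ×ˢ Set.Ioo (y i) (y i + h i))
             (Set.Ioo (x j) (x j + w j) ×ˢ Set.Ioo (y j) (y j + h j)) ↔
    RectSep w h x y i j := by
  constructor
  · intro hd
    by_contra hs
    unfold RectSep at hs
    push_neg at hs
    obtain ⟨h1, h2, h3, h4⟩ := hs
    rw [Set.disjoint_left] at hd
    set ξ : ℝ := (max (x i) (x j) + min (x i + w i) (x j + w j)) / 2 with hξ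
    set η : ℝ := (max (y i) (y j) + min (y i + h i) (y j + h j)) / 2 with hη
    have hx1 : max (x i) (x j) < min (x i + w i) (x j + w j) := by
      simp only [max_lt_iff, lt_min_iff]
      constructor <;> constructor <;> linarith
    have hy1 : max (y i) (y j) < min (y i + h i) (y j + h j) := by
      simp only [max_lt_iff, lt_min_iff]
      constructor <;> constructor <;> linarith
    have hmx : max (x i) (x j) < ξ ∧ ξ < min (x i + w i) (x j + w j) := by
      constructor <;> (rw [hξ]; linarith)
    have hmy : max (y i) (y j) < η ∧ η < min (y i + h i) (y j + h j) := by
      constructor <;> (rw [hη]; linarith)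
    have hmem1 : (ξ, η) ∈ Set.Ioo (x i) (x i + w i) ×ˢ Set.Ioo (y i) (y i + h i) := by
      simp only [Set.mem_prod, Set.mem_Ioo]
      refine ⟨⟨?_, ?_⟩, ?_, ?_⟩
      · exact lt_of_le_of_lt (le_max_left _ _) hmx.1
      · exact lt_of_lt_of_le hmx.2 (min_le_left _ _)
      · exact lt_of_le_of_lt (le_max_left _ _) hmy.1
      · exact lt_of_lt_of_le hmy.2 (min_le_left _ _)
    have hmem2 : (ξ, η) ∈ Set.Ioo (x j) (x j + w j) ×ˢ Set.Ioo (y j) (y j + h j) := by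
      simp only [Set.mem_prod, Set.mem_Ioo]
      refine ⟨⟨?_, ?_⟩, ?_, ?_⟩
      · exact lt_of_le_of_lt (le_max_right _ _) hmx.1
      · exact lt_of_lt_of_le hmx.2 (min_le_right _ _)
      · exact lt_of_le_of_lt (le_max_right _ _) hmy.1
      · exact lt_of_lt_of_le hmy.2 (min_le_right _ _)
    exact hd hmem1 hmem2
  · intro hs
    rw [Set.disjoint_left]
    rintro ⟨a, b⟩ hp hq
    simp only [Set.mem_prod, Set.mem_Ioo] at hp hq
    rcases hs with hc | hc | hc | hc <;> linarith [hp.1.1, hp.1.2, hp.2.1, hp.2.2,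
      hq.1.1, hq.1.2, hq.2.1, hq.2.2]

/-- Key normalization lemma: the `x`-coordinates of a separated family can be replaced by
subset sums of widths, only decreasing, preserving separation. -/
lemma rect_normalize {ι : Type*} [DecidableEq ι] (w h : ι → ℝ) (hw : ∀ j, 0 < w j)
    (S : Finset ι) (x y : ι → ℝ) (hx : ∀ j ∈ S, 0 ≤ x j)
    (hsep : ∀ i ∈ S, ∀ j ∈ S, i ≠ j → RectSep w h x y i j) :
    ∃ x' : ι → ℝ, (∀ j ∈ S, 0 ≤ x' j ∧ x' j ≤ x j) ∧
      (∀ i ∈ S, ∀ j ∈ S, i ≠ j → RectSep w h x' y i j) ∧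
      (∀ j ∈ S, ∃ T ⊆ S.erase j, x' j = ∑ k ∈ T, w k) := by
  classical
  induction S using Finset.strongInduction with
  | _ S ih =>
    rcases S.eq_empty_or_nonempty with rfl | hne
    · exact ⟨fun _ => 0, by simp, by simp, by simp⟩
    obtain ⟨j₀, hj₀S, hj₀max⟩ := S.exists_max_image x hne
    set S' := S.erase j₀ with hS'
    have hss : S' ⊂ S := Finset.erase_ssubset hj₀S
    have hS'sub : S' ⊆ S := hss.subset
    obtain ⟨x'', hb, hsep'', hsum''⟩ := ih S' hss
      (fun j hj => hx j (hS'sub hj))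
      (fun i hi j hj hij => hsep i (hS'sub hi) j (hS'sub hj) hij)
    set C : Finset ι := S'.filter (fun k => y j₀ < y k + h k ∧ y k < y j₀ + h j₀) with hC
    set F : Finset ℝ := insert (0:ℝ) (C.image fun k => x'' k + w k) with hF
    have hFne : F.Nonempty := ⟨0, Finset.mem_insert_self _ _⟩
    set M : ℝ := F.max' hFne with hM
    have hM0 : 0 ≤ M := Finset.le_max' F 0 (Finset.mem_insert_self _ _)
    have hMle : ∀ k ∈ C, x'' k + w k ≤ M := fun k hk =>
      Finset.le_max' F _ (Finset.mem_insert_of_mem (Finset.mem_image_of_mem _ hk))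
    have hMcases : M = 0 ∨ ∃ k ∈ C, M = x'' k + w k := by
      have hmem : M ∈ insert (0:ℝ) (C.image fun k => x'' k + w k) := F.max'_mem hFne
      rw [Finset.mem_insert, Finset.mem_image] at hmem
      rcases hmem with h0 | ⟨k, hk, hkeq⟩
      · exact Or.inl h0
      · exact Or.inr ⟨k, hk, hkeq.symm⟩
    -- in C, right edge ≤ x j₀
    have hCprop : ∀ k ∈ C, x k + w k ≤ x j₀ := by
      intro k hk
      rw [hC, Finset.mem_filter] at hk
      obtain ⟨hkS', hy1, hy2⟩ := hk
      have hkne : k ≠ j₀ := Finset.ne_of_mem_erase hkS'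
      have := hsep k (hS'sub hkS') j₀ hj₀S hkne
      rcases this with hc | hc | hc | hc
      · exact hc
      · exfalso; have := hj₀max k (hS'sub hkS'); have := hw j₀; linarith
      · exfalso; linarith
      · exfalso; linarith
    have hMleX : M ≤ x j₀ := by
      rcases hMcases with h0 | ⟨k, hk, hkeq⟩
      · rw [h0]; exact hx j₀ hj₀S
      · rw [hkeq]
        have hkS' : k ∈ S' := (Finset.mem_filter.mp (hC ▸ hk)).1
        have := (hb k hkS').2
        have := hCprop k hk
        linarith
    refine ⟨Function.update x'' j₀ M, ?_, ?_, ?_⟩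
    · intro j hj
      by_cases hjj : j = j₀
      · subst hjj; simp only [Function.update_self]; exact ⟨hM0, hMleX⟩
      · rw [Function.update_of_ne hjj]
        exact hb j (Finset.mem_erase.mpr ⟨hjj, hj⟩)
    · -- separation
      have key : ∀ i ∈ S', RectSep w h (Function.update x'' j₀ M) y i j₀ := by
        intro i hi
        by_cases hysep : y i + h i ≤ y j₀ ∨ y j₀ + h j₀ ≤ y i
        · rcases hysep with hc | hc
          · exact Or.inr (Or.inr (Or.inl hc))
          · exact Or.inr (Or.inr (Or.inr hc))
        · push_neg at hysep
          have hiC : i ∈ C := by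
            rw [hC, Finset.mem_filter]; exact ⟨hi, by linarith [hysep.1], by linarith [hysep.2]⟩
          left
          have hine : i ≠ j₀ := Finset.ne_of_mem_erase hi
          rw [Function.update_of_ne hine, Function.update_self]
          exact hMle i hiC
      intro i hi j hj hij
      by_cases hii : i = j₀
      · subst hii
        have hjS' : j ∈ S' := Finset.mem_erase.mpr ⟨fun hh => hij hh.symm, hj⟩
        exact sep_comm.mp (key j hjS')
      by_cases hjj : j = j₀
      · subst hjj
        exact key i (Finset.mem_erase.mpr ⟨hii, hi⟩)
      · have hsep2 : RectSep w h x'' y i j :=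
          hsep'' i (Finset.mem_erase.mpr ⟨hii, hi⟩) j (Finset.mem_erase.mpr ⟨hjj, hj⟩) hij
        unfold RectSep at hsep2 ⊢
        rw [Function.update_of_ne hii, Function.update_of_ne hjj]
        exact hsep2
    · -- subset sums
      intro j hj
      by_cases hjj : j = j₀
      · subst hjj
        simp only [Function.update_self]
        rcases hMcases with h0 | ⟨k, hk, hkeq⟩
        · exact ⟨∅, Finset.empty_subset _, by simpa using h0⟩
        · have hkS' : k ∈ S' := (Finset.mem_filter.mp (hC ▸ hk)).1
          obtain ⟨T, hTsub, hTsum⟩ := hsum'' k hkS'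
          have hkT : k ∉ T := fun hkt => (Finset.mem_erase.mp (hTsub hkt)).1 rfl
          refine ⟨insert k T, ?_, ?_⟩
          · intro a ha
            rw [Finset.mem_insert] at ha
            rcases ha with rfl | ha
            · exact hkS'
            · exact (Finset.erase_subset _ _) (hTsub ha)
          · rw [Finset.sum_insert hkT, hkeq, hTsum]; ring
      · rw [Function.update_of_ne hjj]
        obtain ⟨T, hTsub, hTsum⟩ := hsum'' j (Finset.mem_erase.mpr ⟨hjj, hj⟩)
        refine ⟨T, ?_, hTsum⟩
        intro a ha
        have := hTsub ha
        rw [Finset.mem_erase] at this ⊢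
        exact ⟨this.1, hS'sub this.2⟩

theorem stmt_13 {ι : Type*} [DecidableEq ι] (w h : ι → ℝ) (W H : ℝ)
    (hW : 0 < W) (hH : 0 < H) (hw : ∀ j, 0 < w j) (hh : ∀ j, 0 < h j)
    (S : Finset ι) (hS : Packable w h W H S) :
    ∃ x y : ι → ℝ, IsPacking w h W H S x y ∧
      (∀ j ∈ S, ∃ T ⊆ S.erase j, x j = ∑ k ∈ T, w k) ∧
      (∀ j ∈ S, ∃ U ⊆ S.erase j, y j = ∑ k ∈ U, h k) := by
  obtain ⟨x, y, hbd, hdis⟩ := hS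
  have hsep : ∀ i ∈ S, ∀ j ∈ S, i ≠ j → RectSep w h x y i j := fun i hi j hj hij =>
    (disjoint_iff_sep (hw i) (hw j) (hh i) (hh j)).mp (hdis i hi j hj hij)
  obtain ⟨x', hxb, hxsep, hxsum⟩ := rect_normalize w h hw S x y
    (fun j hj => (hbd j hj).1) hsep
  obtain ⟨y', hyb, hysep, hysum⟩ := rect_normalize h w hh S y x'
    (fun j hj => (hbd j hj).2.2.1)
    (fun i hi j hj hij => sep_swap.mp (hxsep i hi j hj hij))
  refine ⟨x', y', ⟨?_, ?_⟩, hxsum, hysum⟩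
  · intro j hj
    obtain ⟨h1, h2, h3, h4⟩ := hbd j hj
    exact ⟨(hxb j hj).1, by linarith [(hxb j hj).2], (hyb j hj).1, by linarith [(hyb j hj).2]⟩
  · intro i hi j hj hij
    exact (disjoint_iff_sep (hw i) (hw j) (hh i) (hh j)).mpr
      (sep_swap.mp (hysep i hi j hj hij))
end

section
/- Let N be a finite set of items and define the reduced bin width W* = max{ Σ_{j∈T} w_j : T ⊆ N, Σ_{j∈T} w_j <= W } (the maximum over all subsets, including the empty set). Then every subset S ⊆ N that is packable into the bin of width W and height H is also packable into the reduced bin of width W* and height H. (Validity of the bin-shrinking preprocessing.) -/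
private lemma prodDisjLeft {A B C D : Set ℝ} (h : Disjoint A C) :
    Disjoint (A ×ˢ B) (C ×ˢ D) := by
  rw [Set.disjoint_left] at *
  rintro ⟨a, b⟩ ⟨ha, hb⟩ ⟨hc, hd⟩
  exact h ha hc

private lemma prodDisjRight {A B C D : Set ℝ} (h : Disjoint B D) :
    Disjoint (A ×ˢ B) (C ×ˢ D) := by
  rw [Set.disjoint_left] at *
  rintro ⟨a, b⟩ ⟨ha, hb⟩ ⟨hc, hd⟩
  exact h hb hd

private lemma iooDisj {a b c d : ℝ} (h : b ≤ c) :
    Disjoint (Set.Ioo a b) (Set.Ioo c d) := by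
  rw [Set.disjoint_left]
  intro t ht ht'
  exact absurd (ht.2.trans_le h) (not_lt.mpr ht'.1.le)

private lemma compact_packing {ι : Type*} [DecidableEq ι] (w h : ι → ℝ) (W H : ℝ)
    (hw : ∀ j, 0 < w j) (hh : ∀ j, 0 < h j) :
    ∀ (S : Finset ι) (x y : ι → ℝ), IsPacking w h W H S x y →
      ∃ x' : ι → ℝ, IsPacking w h W H S x' y ∧ (∀ j ∈ S, x' j ≤ x j) ∧
        ∀ j ∈ S, ∃ T ⊆ S, x' j + w j = ∑ i ∈ T, w i := by
  classical
  intro S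
  induction S using Finset.strongInduction with
  | _ S IH =>
    intro x y hP
    rcases S.eq_empty_or_nonempty with rfl | hS
    · exact ⟨x, hP, by simp, by simp⟩
    obtain ⟨j, hjS, hjmax⟩ := Finset.exists_max_image S x hS
    set S₀ := S.erase j with hS₀
    have hsub : S₀ ⊂ S := Finset.erase_ssubset hjS
    have hP₀ : IsPacking w h W H S₀ x y := by
      constructor
      · intro i hi; exact hP.1 i (Finset.mem_of_mem_erase hi)
      · intro i hi k hk hik
        exact hP.2 i (Finset.mem_of_mem_erase hi) k (Finset.mem_of_mem_erase hk) hik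
    obtain ⟨x₀, hPk₀, hle₀, hchain₀⟩ := IH S₀ hsub x y hP₀
    set B := S₀.filter (fun i => y j < y i + h i ∧ y i < y j + h j) with hB
    set C := insert (0 : ℝ) (B.image (fun i => x₀ i + w i)) with hC
    have hCne : C.Nonempty := ⟨0, Finset.mem_insert_self _ _⟩
    obtain ⟨m, hm⟩ : ∃ m : ℝ, m = C.max' hCne := ⟨_, rfl⟩
    have hm0 : (0 : ℝ) ≤ m := hm ▸ Finset.le_max' C 0 (Finset.mem_insert_self _ _)
    have hmB : ∀ i ∈ B, x₀ i + w i ≤ m := fun i hi =>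
      hm ▸ Finset.le_max' C _ (Finset.mem_insert_of_mem (Finset.mem_image_of_mem _ hi))
    -- key geometric fact: items overlapping j's y-interval end before x j
    have key : ∀ i ∈ B, x i + w i ≤ x j := by
      intro i hiB
      have hiS₀ : i ∈ S₀ := (Finset.mem_filter.mp hiB).1
      obtain ⟨hy1, hy2⟩ := (Finset.mem_filter.mp hiB).2
      have hiS : i ∈ S := Finset.mem_of_mem_erase hiS₀
      have hij : i ≠ j := Finset.ne_of_mem_erase hiS₀
      by_contra hcon
      push_neg at hcon
      have hxij : x i ≤ x j := hjmax i hiS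
      have hb : x j < min (x i + w i) (x j + w j) := lt_min hcon (by linarith [hw j])
      have hy : max (y i) (y j) < min (y i + h i) (y j + h j) := by
        have := hh i; have := hh j
        apply max_lt <;> apply lt_min <;> linarith
      set px := (x j + min (x i + w i) (x j + w j)) / 2 with hpx
      set py := (max (y i) (y j) + min (y i + h i) (y j + h j)) / 2 with hpy
      have hpx1 : x j < px := by rw [hpx]; linarith
      have hpx2 : px < min (x i + w i) (x j + w j) := by rw [hpx]; linarith
      have hpy1 : max (y i) (y j) < py := by rw [hpy]; linarith
      have hpy2 : py < min (y i + h i) (y j + h j) := by rw [hpy]; linarith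
      have hd := hP.2 i hiS j hjS hij
      rw [Set.disjoint_left] at hd
      have hpi : (px, py) ∈ Set.Ioo (x i) (x i + w i) ×ˢ Set.Ioo (y i) (y i + h i) :=
        ⟨⟨lt_of_le_of_lt hxij hpx1, lt_of_lt_of_le hpx2 (min_le_left _ _)⟩,
         lt_of_le_of_lt (le_max_left _ _) hpy1, lt_of_lt_of_le hpy2 (min_le_left _ _)⟩
      have hpj : (px, py) ∈ Set.Ioo (x j) (x j + w j) ×ˢ Set.Ioo (y j) (y j + h j) :=
        ⟨⟨hpx1, lt_of_lt_of_le hpx2 (min_le_right _ _)⟩,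
         lt_of_le_of_lt (le_max_right _ _) hpy1, lt_of_lt_of_le hpy2 (min_le_right _ _)⟩
      exact hd hpi hpj
    have hmle : m ≤ x j := by
      have hmem : m ∈ C := hm ▸ Finset.max'_mem C hCne
      rw [hC, Finset.mem_insert] at hmem
      rcases hmem with h0 | hmem
      · rw [h0]; exact (hP.1 j hjS).1
      · obtain ⟨i, hiB, hie⟩ := Finset.mem_image.mp hmem
        have hiS₀ : i ∈ S₀ := (Finset.mem_filter.mp hiB).1
        have : x₀ i + w i ≤ x i + w i := by linarith [hle₀ i hiS₀]
        rw [← hie]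
        exact this.trans (key i hiB)
    set x' := Function.update x₀ j m with hx'
    have hx'j : x' j = m := Function.update_self j m x₀
    have hx'i : ∀ i, i ≠ j → x' i = x₀ i := fun i hij => Function.update_of_ne hij m x₀
    -- disjointness of j with each item of S₀
    have hdj : ∀ k ∈ S₀,
        Disjoint (Set.Ioo (x' j) (x' j + w j) ×ˢ Set.Ioo (y j) (y j + h j))
          (Set.Ioo (x' k) (x' k + w k) ×ˢ Set.Ioo (y k) (y k + h k)) := by
      intro k hkS₀
      have hkj : k ≠ j := Finset.ne_of_mem_erase hkS₀
      rw [hx'j, hx'i k hkj]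
      by_cases hkB : k ∈ B
      · exact (prodDisjLeft (iooDisj (hmB k hkB))).symm
      · have : ¬ (y j < y k + h k ∧ y k < y j + h j) := by
          intro hcon; exact hkB (Finset.mem_filter.mpr ⟨hkS₀, hcon⟩)
        push_neg at this
        rcases le_or_gt (y k + h k) (y j) with hy | hy
        · exact (prodDisjRight (iooDisj hy)).symm
        · exact prodDisjRight (iooDisj (this hy))
    refine ⟨x', ⟨?_, ?_⟩, ?_, ?_⟩
    · -- bounds
      intro i hi
      by_cases hij : i = j
      · subst hij
        rw [hx'j]
        obtain ⟨h1, h2, h3, h4⟩ := hP.1 i hi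
        exact ⟨hm0, by linarith, h3, h4⟩
      · rw [hx'i i hij]
        exact hPk₀.1 i (Finset.mem_erase.mpr ⟨hij, hi⟩)
    · -- disjointness
      intro i hi k hk hik
      by_cases hij : i = j
      · subst hij
        exact hdj k (Finset.mem_erase.mpr ⟨Ne.symm hik, hk⟩)
      · by_cases hkj : k = j
        · subst hkj
          exact (hdj i (Finset.mem_erase.mpr ⟨hij, hi⟩)).symm
        · rw [hx'i i hij, hx'i k hkj]
          exact hPk₀.2 i (Finset.mem_erase.mpr ⟨hij, hi⟩) k (Finset.mem_erase.mpr ⟨hkj, hk⟩) hik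
    · -- x' ≤ x
      intro i hi
      by_cases hij : i = j
      · subst hij; rw [hx'j]; exact hmle
      · rw [hx'i i hij]; exact hle₀ i (Finset.mem_erase.mpr ⟨hij, hi⟩)
    · -- chains
      intro i hi
      by_cases hij : i = j
      · subst hij
        rw [hx'j]
        have hmem : m ∈ C := hm ▸ Finset.max'_mem C hCne
        rw [hC, Finset.mem_insert] at hmem
        rcases hmem with h0 | hmem
        · refine ⟨{i}, by simpa using hi, ?_⟩
          rw [h0, Finset.sum_singleton]; ring
        · obtain ⟨k, hkB, hke⟩ := Finset.mem_image.mp hmem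
          have hkS₀ : k ∈ S₀ := (Finset.mem_filter.mp hkB).1
          obtain ⟨T, hTS, hTsum⟩ := hchain₀ k hkS₀
          have hiT : i ∉ T := fun hc => Finset.notMem_erase i S (hTS hc)
          refine ⟨insert i T, ?_, ?_⟩
          · intro a ha
            rcases Finset.mem_insert.mp ha with rfl | ha
            · exact hi
            · exact Finset.mem_of_mem_erase (hTS ha)
          · rw [Finset.sum_insert hiT, ← hke, hTsum]; ring
      · rw [hx'i i hij]
        obtain ⟨T, hTS, hTsum⟩ := hchain₀ i (Finset.mem_erase.mpr ⟨hij, hi⟩)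
        exact ⟨T, fun a ha => Finset.mem_of_mem_erase (hTS ha), hTsum⟩

theorem stmt_14 {ι : Type*} [DecidableEq ι] (w h : ι → ℝ) (W H : ℝ)
    (hW : 0 < W) (hH : 0 < H) (hw : ∀ j, 0 < w j) (hh : ∀ j, 0 < h j)
    (N : Finset ι)
    (W' : ℝ)
    (hW'1 : ∃ T ⊆ N, (∑ j ∈ T, w j ≤ W ∧ ∑ j ∈ T, w j = W'))
    (hW'2 : ∀ T ⊆ N, ∑ j ∈ T, w j ≤ W → ∑ j ∈ T, w j ≤ W') :
    ∀ S ⊆ N, Packable w h W H S → Packable w h W' H S := by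
  rintro S hSN ⟨x, y, hP⟩
  obtain ⟨x', hP', hle, hchain⟩ := compact_packing w h W H hw hh S x y hP
  refine ⟨x', y, ?_, hP'.2⟩
  intro j hj
  obtain ⟨h0, hWb, hy0, hyH⟩ := hP'.1 j hj
  refine ⟨h0, ?_, hy0, hyH⟩
  obtain ⟨T, hTS, hTsum⟩ := hchain j hj
  have hle' : ∑ i ∈ T, w i ≤ W' := hW'2 T (hTS.trans hSN) (by rw [← hTsum]; exact hWb)
  linarith [hTsum ▸ hle']
end

section
/- Let N be a finite set of items, fix j0 ∈ N with w_{j0} <= W, and define the lifted width w* = W - max{ Σ_{k∈T} w_k : T ⊆ N \ {j0}, Σ_{k∈T} w_k <= W - w_{j0} } (the maximum over all subsets, including the empty set), so that w* >= w_{j0}. If N is packable into the bin of width W and height H with the original widths, then N is also packable into the same bin when the width of item j0 is replaced by w* and all other item widths and all heights are unchanged. (Validity of the item-enlargement preprocessing.) -/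
set_option linter.unusedSectionVars false

section Aux

open Finset

variable {ι : Type*} [DecidableEq ι]

noncomputable def FF (N : Finset ι) (c : ι → NNReal) (R : ι → ι → Prop) [DecidableRel R] :
    ℕ → ι → NNReal
  | 0, _ => 0
  | n + 1, i => (N.filter (fun k => R k i)).sup fun k => FF N c R n k + c k

lemma FF_succ (N : Finset ι) (c : ι → NNReal) (R : ι → ι → Prop) [DecidableRel R] (n : ℕ)
    (i : ι) :
    FF N c R (n + 1) i = (N.filter (fun k => R k i)).sup fun k => FF N c R n k + c k := rfl

lemma FF_stab (N : Finset ι) (c : ι → NNReal) (R : ι → ι → Prop) [DecidableRel R]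
    (μ : ι → ℕ) (hμ : ∀ k i, k ∈ N → R k i → μ k < μ i) :
    ∀ d : ℕ, ∀ i, μ i ≤ d → ∀ n m, μ i < n → μ i < m → FF N c R n i = FF N c R m i := by
  intro d
  induction d with
  | zero =>
    intro i hi n m hn hm
    obtain ⟨n', rfl⟩ : ∃ n', n = n' + 1 := ⟨n - 1, by omega⟩
    obtain ⟨m', rfl⟩ : ∃ m', m = m' + 1 := ⟨m - 1, by omega⟩
    have hempty : N.filter (fun k => R k i) = ∅ := by
      rw [Finset.filter_eq_empty_iff]
      intro k hk hRk
      have := hμ k i hk hRk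
      omega
    rw [FF_succ, FF_succ, hempty]
    simp
  | succ d ih =>
    intro i hi n m hn hm
    obtain ⟨n', rfl⟩ : ∃ n', n = n' + 1 := ⟨n - 1, by omega⟩
    obtain ⟨m', rfl⟩ : ∃ m', m = m' + 1 := ⟨m - 1, by omega⟩
    rw [FF_succ, FF_succ]
    apply Finset.sup_congr rfl
    intro k hk
    rw [Finset.mem_filter] at hk
    have hlt := hμ k i hk.1 hk.2
    rw [ih k (by omega) n' m' (by omega) (by omega)]

lemma FF_le (N : Finset ι) (c : ι → NNReal) (R : ι → ι → Prop) [DecidableRel R]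
    (μ : ι → ℕ) (hμ : ∀ k i, k ∈ N → R k i → μ k < μ i) (hμcard : ∀ i, μ i ≤ N.card)
    (k i : ι) (hk : k ∈ N) (hRki : R k i) :
    FF N c R (N.card + 1) k + c k ≤ FF N c R (N.card + 1) i := by
  have hlt := hμ k i hk hRki
  have hci := hμcard i
  have hstab : FF N c R N.card k = FF N c R (N.card + 1) k :=
    FF_stab N c R μ hμ N.card k (by omega) _ _ (by omega) (by omega)
  rw [FF_succ N c R N.card i, ← hstab]
  exact Finset.le_sup (f := fun k => FF N c R N.card k + c k)
    (Finset.mem_filter.2 ⟨hk, hRki⟩)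

lemma FF_chain (N : Finset ι) (c : ι → NNReal) (R : ι → ι → Prop) [DecidableRel R]
    (μ : ι → ℕ) (hμ : ∀ k i, k ∈ N → R k i → μ k < μ i) (hμcard : ∀ i, μ i ≤ N.card)
    (x w : ι → ℝ) (hw : ∀ k, 0 < w k) (hx : ∀ k ∈ N, 0 ≤ x k)
    (hRx : ∀ k i, k ∈ N → R k i → x k + w k ≤ x i) :
    ∀ i ∈ N, ∃ C : Finset ι, C ⊆ N ∧ i ∈ C ∧
      ((FF N c R (N.card + 1) i : ℝ) + (c i : ℝ) = ∑ k ∈ C, (c k : ℝ)) ∧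
      (∑ k ∈ C, w k ≤ x i + w i) ∧ (∀ k ∈ C, x k ≤ x i) := by
  suffices H : ∀ n : ℕ, ∀ i ∈ N, μ i < n → ∃ C : Finset ι, C ⊆ N ∧ i ∈ C ∧
      ((FF N c R (N.card + 1) i : ℝ) + (c i : ℝ) = ∑ k ∈ C, (c k : ℝ)) ∧
      (∑ k ∈ C, w k ≤ x i + w i) ∧ (∀ k ∈ C, x k ≤ x i) by
    intro i hi
    exact H (μ i + 1) i hi (by omega)
  intro n
  induction n with
  | zero => intro i hi h; omega
  | succ n ih =>
    intro i hiN hin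
    rcases (N.filter (fun k => R k i)).eq_empty_or_nonempty with hemp | hne
    · have h0 : FF N c R (N.card + 1) i = 0 := by
        rw [FF_succ, hemp]; rfl
      refine ⟨{i}, by simpa using hiN, Finset.mem_singleton_self i, ?_, ?_, ?_⟩
      · rw [h0]; simp
      · simp only [Finset.sum_singleton]
        linarith [hx i hiN]
      · intro k hk
        rw [Finset.mem_singleton] at hk
        subst hk; rfl
    · obtain ⟨k, hkmem, hksup⟩ :=
        Finset.exists_mem_eq_sup _ hne (fun k => FF N c R N.card k + c k)
      rw [Finset.mem_filter] at hkmem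
      obtain ⟨hkN, hRki⟩ := hkmem
      have hlt := hμ k i hkN hRki
      have hci := hμcard i
      have hstab : FF N c R N.card k = FF N c R (N.card + 1) k :=
        FF_stab N c R μ hμ N.card k (by omega) _ _ (by omega) (by omega)
      have hval : FF N c R (N.card + 1) i = FF N c R (N.card + 1) k + c k := by
        rw [FF_succ, hksup, hstab]
      obtain ⟨Ck, hCkN, hkCk, hsum, hwsum, hxle⟩ := ih k hkN (by omega)
      have hxki : x k + w k ≤ x i := hRx k i hkN hRki
      have hiCk : i ∉ Ck := by
        intro hmem
        have := hxle i hmem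
        linarith [hw k]
      refine ⟨insert i Ck, ?_, Finset.mem_insert_self i Ck, ?_, ?_, ?_⟩
      · intro j hj
        rcases Finset.mem_insert.1 hj with rfl | hj
        · exact hiN
        · exact hCkN hj
      · rw [Finset.sum_insert hiCk, hval]
        push_cast
        linarith
      · rw [Finset.sum_insert hiCk]
        linarith
      · intro j hj
        rcases Finset.mem_insert.1 hj with rfl | hj
        · exact le_refl _
        · have := hxle j hj
          linarith [hw k]



lemma Ioo_disj_iff {a b c d : ℝ} (hab : a < b) (hcd : c < d) :
    Disjoint (Set.Ioo a b) (Set.Ioo c d) ↔ b ≤ c ∨ d ≤ a := by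
  rw [Set.Ioo_disjoint_Ioo]
  constructor
  · intro h
    rw [min_le_iff] at h
    rcases h with h | h <;> rw [le_max_iff] at h <;> rcases h with h | h
    · linarith
    · exact Or.inl h
    · exact Or.inr h
    · linarith
  · rintro (h | h)
    · exact le_trans (min_le_left _ _) (le_trans h (le_max_right _ _))
    · exact le_trans (min_le_right _ _) (le_trans h (le_max_left _ _))

lemma prod_disj_cases {s t u v : Set ℝ}
    (h : Disjoint (s ×ˢ t) (u ×ˢ v)) : Disjoint s u ∨ Disjoint t v := by
  by_contra hc
  push_neg at hc
  obtain ⟨h1, h2⟩ := hc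
  rw [Set.not_disjoint_iff] at h1 h2
  obtain ⟨a, has, hau⟩ := h1
  obtain ⟨b, hbt, hbv⟩ := h2
  exact Set.disjoint_left.1 h (Set.mk_mem_prod has hbt) (Set.mk_mem_prod hau hbv)

lemma prod_disj_of_left {s t u v : Set ℝ} (h : Disjoint s u) :
    Disjoint (s ×ˢ t) (u ×ˢ v) := by
  rw [Set.disjoint_left]
  rintro ⟨a, b⟩ ⟨ha, hb⟩ ⟨ha', hb'⟩
  exact Set.disjoint_left.1 h ha ha'

lemma prod_disj_of_right {s t u v : Set ℝ} (h : Disjoint t v) :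
    Disjoint (s ×ˢ t) (u ×ˢ v) := by
  rw [Set.disjoint_left]
  rintro ⟨a, b⟩ ⟨ha, hb⟩ ⟨ha', hb'⟩
  exact Set.disjoint_left.1 h hb hb'

end Aux

theorem stmt_15 {ι : Type*} [DecidableEq ι] (w h : ι → ℝ) (W H : ℝ)
    (hW : 0 < W) (hH : 0 < H) (hw : ∀ j, 0 < w j) (hh : ∀ j, 0 < h j)
    (N : Finset ι) (j0 : ι) (hj0 : j0 ∈ N) (hwj0 : w j0 ≤ W)
    (M : ℝ)
    (hM1 : ∃ T ⊆ N.erase j0, (∑ k ∈ T, w k ≤ W - w j0 ∧ ∑ k ∈ T, w k = M))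
    (hM2 : ∀ T ⊆ N.erase j0, ∑ k ∈ T, w k ≤ W - w j0 → ∑ k ∈ T, w k ≤ M)
    (w' : ℝ) (hw'def : w' = W - M) :
    w j0 ≤ w' ∧
    (Packable w h W H N → Packable (Function.update w j0 w') h W H N) := by
  classical
  obtain ⟨T, hTsub, hTle, hTM⟩ := hM1
  have hMle : M ≤ W - w j0 := by rw [← hTM]; exact hTle
  have hwj0w' : w j0 ≤ w' := by rw [hw'def]; linarith
  refine ⟨hwj0w', ?_⟩
  rintro ⟨x, y, hin, hdisj⟩
  set w2 : ι → ℝ := Function.update w j0 w' with hw2def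
  have hw2j0 : w2 j0 = w' := Function.update_self _ _ _
  have hw2ne : ∀ k, k ≠ j0 → w2 k = w k := fun k hk => Function.update_of_ne hk _ _
  have hw2pos : ∀ k, 0 < w2 k := by
    intro k
    by_cases hk : k = j0
    · rw [hk, hw2j0]; linarith [hw j0]
    · rw [hw2ne k hk]; exact hw k
  set c : ι → NNReal := fun k => Real.toNNReal (w2 k) with hcdef
  have hcc : ∀ k, (c k : ℝ) = w2 k := fun k => Real.coe_toNNReal _ (hw2pos k).le
  set R : ι → ι → Prop :=
    fun k i => (x k + w k ≤ x i) ∧ (y k < y i + h i ∧ y i < y k + h k) with hRdef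
  letI : DecidableRel R := fun a b => Classical.dec _
  set μ : ι → ℕ := fun i => (N.filter fun k => x k < x i).card with hμdef
  have hμ : ∀ k i, k ∈ N → R k i → μ k < μ i := by
    intro k i hk hRki
    have hxk : x k < x i := lt_of_lt_of_le (lt_add_of_pos_right _ (hw k)) hRki.1
    apply Finset.card_lt_card
    constructor
    · intro j hj
      simp only [Finset.mem_filter] at hj ⊢
      exact ⟨hj.1, hj.2.trans hxk⟩
    · intro hsub
      have := hsub (Finset.mem_filter.2 ⟨hk, hxk⟩)
      simp only [Finset.mem_filter] at this
      exact lt_irrefl _ this.2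
  have hμcard : ∀ i, μ i ≤ N.card := fun i => Finset.card_filter_le _ _
  have hRx : ∀ k i, k ∈ N → R k i → x k + w k ≤ x i := fun k i _ hRk => hRk.1
  have hx0 : ∀ k ∈ N, 0 ≤ x k := fun k hk => (hin k hk).1
  set x' : ι → ℝ := fun i => (FF N c R (N.card + 1) i : ℝ) with hx'def
  have hx'0 : ∀ i, 0 ≤ x' i := fun i => NNReal.coe_nonneg _
  have hstep : ∀ k i, k ∈ N → R k i → x' k + w2 k ≤ x' i := by
    intro k i hk hRki
    have h1 := FF_le N c R μ hμ hμcard k i hk hRki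
    have h2 : ((FF N c R (N.card + 1) k + c k : NNReal) : ℝ) ≤ x' i := by
      exact_mod_cast h1
    rw [NNReal.coe_add, hcc] at h2
    exact h2
  have hbound : ∀ i ∈ N, x' i + w2 i ≤ W := by
    intro i hi
    obtain ⟨C, hCN, hiC, hsum, hwsum, -⟩ :=
      FF_chain N c R μ hμ hμcard x w hw hx0 hRx i hi
    have hxiW : x i + w i ≤ W := (hin i hi).2.1
    simp only [hcc] at hsum
    have hsum2 : x' i + w2 i = ∑ k ∈ C, w2 k := hsum
    by_cases hj0C : j0 ∈ C
    · have hCw : w j0 + ∑ k ∈ C.erase j0, w k = ∑ k ∈ C, w k :=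
        Finset.add_sum_erase C w hj0C
      have hCw2 : ∑ k ∈ C, w2 k = w' + ∑ k ∈ C.erase j0, w k := by
        rw [← Finset.add_sum_erase C w2 hj0C, hw2j0]
        congr 1
        exact Finset.sum_congr rfl fun k hk => hw2ne k (Finset.ne_of_mem_erase hk)
      have h1 : ∑ k ∈ C.erase j0, w k ≤ W - w j0 := by linarith
      have h2 := hM2 _ (Finset.erase_subset_erase j0 hCN) h1
      rw [hsum2, hCw2, hw'def]
      linarith
    · have heq : ∑ k ∈ C, w2 k = ∑ k ∈ C, w k :=
        Finset.sum_congr rfl fun k hk => hw2ne k (fun e => hj0C (e ▸ hk))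
      rw [hsum2, heq]
      linarith
  refine ⟨x', y, ?_, ?_⟩
  · intro j hj
    exact ⟨hx'0 j, hbound j hj, (hin j hj).2.2.1, (hin j hj).2.2.2⟩
  · intro i hi j hj hij
    have hd := hdisj i hi j hj hij
    by_cases hy : Disjoint (Set.Ioo (y i) (y i + h i)) (Set.Ioo (y j) (y j + h j))
    · exact prod_disj_of_right hy
    · have hyov : y i < y j + h j ∧ y j < y i + h i := by
        rw [Ioo_disj_iff (lt_add_of_pos_right _ (hh i)) (lt_add_of_pos_right _ (hh j))] at hy
        push_neg at hy
        exact ⟨hy.2, hy.1⟩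
      have hxdis : Disjoint (Set.Ioo (x i) (x i + w i)) (Set.Ioo (x j) (x j + w j)) := by
        rcases prod_disj_cases hd with hxd | hyd
        · exact hxd
        · exact absurd hyd hy
      rcases (Ioo_disj_iff (lt_add_of_pos_right _ (hw i)) (lt_add_of_pos_right _ (hw j))).1
          hxdis with hle | hle
      · have hRij : R i j := ⟨hle, hyov.1, hyov.2⟩
        have := hstep i j hi hRij
        exact prod_disj_of_left ((Ioo_disj_iff (lt_add_of_pos_right _ (hw2pos i))
          (lt_add_of_pos_right _ (hw2pos j))).2 (Or.inl this))
      · have hRji : R j i := ⟨hle, hyov.2, hyov.1⟩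
        have := hstep j i hj hRji
        exact prod_disj_of_left ((Ioo_disj_iff (lt_add_of_pos_right _ (hw2pos i))
          (lt_add_of_pos_right _ (hw2pos j))).2 (Or.inr this))
end

section
/- Let W and H be positive integers and let S be a finite set of items with positive integer widths w_j <= W and positive integer heights h_j <= H. If S is packable into the bin of width W and height H, then there exist subsets P_0, P_1, ..., P_{W-1} ⊆ S such that Σ_{j∈P_t} h_j <= H for every t ∈ {0, ..., W-1}, and every item j ∈ S belongs to exactly w_j of the sets P_0, ..., P_{W-1}. (This shows the bar relaxation 2D-UKP is a relaxation of the two-dimensional packing feasibility problem, so z(2D-UKP) >= z(2D-KP).) -/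
open MeasureTheory ENNReal in
lemma sum_heights_le_aux {ι : Type*} (T : Finset ι) (y : ι → ℝ) (h : ι → ℕ) (H : ℕ)
    (hbd : ∀ j ∈ T, 0 ≤ y j ∧ y j + (h j : ℝ) ≤ H)
    (hdisj : (T : Set ι).PairwiseDisjoint (fun j => Set.Ioo (y j) (y j + (h j : ℝ)))) :
    ∑ j ∈ T, h j ≤ H := by
  have key : ∑ j ∈ T, (h j : ℝ≥0∞) ≤ (H : ℝ≥0∞) := by
    calc ∑ j ∈ T, (h j : ℝ≥0∞)
        = ∑ j ∈ T, volume (Set.Ioo (y j) (y j + (h j : ℝ))) := by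
          refine Finset.sum_congr rfl fun j _ => ?_
          rw [Real.volume_Ioo, add_sub_cancel_left, ENNReal.ofReal_natCast]
      _ = volume (⋃ j ∈ T, Set.Ioo (y j) (y j + (h j : ℝ))) :=
          (measure_biUnion_finset hdisj (fun j _ => measurableSet_Ioo)).symm
      _ ≤ volume (Set.Icc (0 : ℝ) H) := by
          apply measure_mono
          refine Set.iUnion₂_subset fun j hj => fun z hz => ?_
          exact ⟨le_trans (hbd j hj).1 hz.1.le, le_trans hz.2.le (hbd j hj).2⟩
      _ = (H : ℝ≥0∞) := by rw [Real.volume_Icc, sub_zero, ENNReal.ofReal_natCast]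
  exact_mod_cast key

lemma card_filter_fin_aux (W a k : ℕ) (hk : a + k ≤ W) :
    (Finset.univ.filter (fun t : Fin W => a ≤ t.val ∧ t.val < a + k)).card = k := by
  have himg : (Finset.univ.filter (fun t : Fin W => a ≤ t.val ∧ t.val < a + k)).image Fin.val
      = Finset.Ico a (a + k) := by
    ext n
    simp only [Finset.mem_image, Finset.mem_filter, Finset.mem_univ, true_and, Finset.mem_Ico]
    constructor
    · rintro ⟨t, ⟨h1, h2⟩, rfl⟩; exact ⟨h1, h2⟩
    · rintro ⟨h1, h2⟩; exact ⟨⟨n, lt_of_lt_of_le h2 hk⟩, ⟨h1, h2⟩, rfl⟩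
  have hcard := Finset.card_image_of_injective
    (Finset.univ.filter (fun t : Fin W => a ≤ t.val ∧ t.val < a + k)) (Fin.val_injective)
  rw [himg, Nat.card_Ico] at hcard
  omega

theorem stmt_16 {ι : Type*} [DecidableEq ι] (W H : ℕ) (hW : 0 < W) (hH : 0 < H)
    (w h : ι → ℕ) (hw : ∀ j, 0 < w j) (hh : ∀ j, 0 < h j)
    (S : Finset ι) (hwle : ∀ j ∈ S, w j ≤ W) (hhle : ∀ j ∈ S, h j ≤ H)
    (hS : Packable (fun j => (w j : ℝ)) (fun j => (h j : ℝ)) (W : ℝ) (H : ℝ) S) :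
    ∃ P : Fin W → Finset ι,
      (∀ t, P t ⊆ S) ∧
      (∀ t, ∑ j ∈ P t, h j ≤ H) ∧
      (∀ j ∈ S, (Finset.univ.filter (fun t => j ∈ P t)).card = w j) := by
  obtain ⟨x, y, hbnd, hdisj⟩ := hS
  classical
  set P : Fin W → Finset ι :=
    fun t => S.filter (fun j => ⌈x j⌉ ≤ (t.val : ℤ) ∧ (t.val : ℤ) < ⌈x j⌉ + w j) with hP
  refine ⟨P, fun t => Finset.filter_subset _ _, ?_, ?_⟩
  · intro t
    apply sum_heights_le_aux (P t) y h H
    · intro j hj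
      have hjS : j ∈ S := Finset.filter_subset _ _ hj
      exact ⟨(hbnd j hjS).2.2.1, (hbnd j hjS).2.2.2⟩
    · intro i hi j hj hij
      simp only [Finset.coe_filter, Set.mem_setOf_eq, hP] at hi hj
      obtain ⟨hiS, hi1, hi2⟩ := hi
      obtain ⟨hjS, hj1, hj2⟩ := hj
      -- the real number t lies in [x i, x i + w i) and [x j, x j + w j)
      have hxi : x i ≤ (t.val : ℝ) := le_trans (Int.le_ceil _) (by exact_mod_cast hi1)
      have hxj : x j ≤ (t.val : ℝ) := le_trans (Int.le_ceil _) (by exact_mod_cast hj1)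
      have hti : ((t.val : ℝ)) < x i + w i := by
        have : ((t.val : ℤ) : ℝ) < (⌈x i⌉ : ℝ) + w i := by exact_mod_cast hi2
        have hc : (⌈x i⌉ : ℝ) < x i + 1 := Int.ceil_lt_add_one _
        push_cast at this ⊢
        have h2 : ((t.val : ℝ)) + 1 ≤ (⌈x i⌉ : ℝ) + w i := by exact_mod_cast hi2
        linarith
      have htj : ((t.val : ℝ)) < x j + w j := by
        have hc : (⌈x j⌉ : ℝ) < x j + 1 := Int.ceil_lt_add_one _
        have h2 : ((t.val : ℝ)) + 1 ≤ (⌈x j⌉ : ℝ) + w j := by exact_mod_cast hj2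
        linarith
      -- pick a common point in the open x-intervals
      set c : ℝ := ((t.val : ℝ) + min (x i + w i) (x j + w j)) / 2 with hc
      have hct : (t.val : ℝ) < c := by
        have : (t.val : ℝ) < min (x i + w i) (x j + w j) := lt_min hti htj
        simp only [hc]; linarith
      have hci : c ∈ Set.Ioo (x i) (x i + (w i : ℝ)) := by
        constructor
        · exact lt_of_le_of_lt hxi hct
        · have : min (x i + w i) (x j + w j) ≤ x i + w i := min_le_left _ _
          simp only [hc]; push_cast; linarith
      have hcj : c ∈ Set.Ioo (x j) (x j + (w j : ℝ)) := by
        constructor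
        · exact lt_of_le_of_lt hxj hct
        · have : min (x i + w i) (x j + w j) ≤ x j + w j := min_le_right _ _
          simp only [hc]; push_cast; linarith
      simp only [Function.onFun]
      rw [Set.disjoint_left]
      intro q hq hq'
      exact Set.disjoint_left.mp (hdisj i hiS j hjS hij)
        (Set.mk_mem_prod hci hq) (Set.mk_mem_prod hcj hq')
  · intro j hj
    have hx0 : 0 ≤ x j := (hbnd j hj).1
    have hceil0 : 0 ≤ ⌈x j⌉ := Int.ceil_nonneg hx0
    set a : ℕ := ⌈x j⌉.toNat with ha
    have haz : (a : ℤ) = ⌈x j⌉ := Int.toNat_of_nonneg hceil0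
    have hk : a + w j ≤ W := by
      have : ⌈x j⌉ + (w j : ℤ) ≤ W := by
        have h1 : ⌈x j + (w j : ℝ)⌉ ≤ (W : ℤ) := Int.ceil_le.mpr (by exact_mod_cast (hbnd j hj).2.1)
        have h2 : ⌈x j + ((w j : ℤ) : ℝ)⌉ = ⌈x j⌉ + (w j : ℤ) := Int.ceil_add_intCast _ _
        push_cast at h2
        omega
      omega
    have hcong : (Finset.univ.filter (fun t : Fin W => j ∈ P t)) =
        (Finset.univ.filter (fun t : Fin W => a ≤ t.val ∧ t.val < a + w j)) := by
      apply Finset.filter_congr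
      intro t _
      simp only [hP, Finset.mem_filter, hj, true_and]
      constructor
      · rintro ⟨h1, h2⟩; omega
      · rintro ⟨h1, h2⟩; omega
    rw [hcong, card_filter_fin_aux W a (w j) hk]
end
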